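/- arXiv:1912.00453 — 6 statements merged into one kernel-verified Lean document; each statement's English description precedes it below -/
import Mathlib

section
/- Under the staircase hypotheses, assume Y is invertible and Y2 is invertible. Then for all complex numbers λ and μ one has det(λY + μX) = λ^{n−k} · det Y · det(λ·1_k + μ·U), where 1_k is the k×k identity matrix. -/
open Matrix Finset

noncomputable section

/-- The determinant of the minor of the `ℕ`-indexed (0-based) matrix `Φ` on the 1-based
row/column range `[i, M]`; for `i = M + 1` this is the determinant of the empty matrix, `1`. -/
def sminor {α : Type*} [CommRing α] (Φ : ℕ → ℕ → α) (i M : ℕ) : α :=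
  (Matrix.of fun r c : Fin (M + 1 - i) => Φ (i - 1 + (r : ℕ)) (i - 1 + (c : ℕ))).det

/-- Package an `ℕ`-indexed (0-based) family of entries as an `n × n` matrix. -/
def toSq {α : Type*} (n : ℕ) (f : ℕ → ℕ → α) : Matrix (Fin n) (Fin n) α :=
  Matrix.of fun i j => f (i : ℕ) (j : ℕ)

/-- The core `Φ` of a staircase pair `(X, Y)` of `n × n` matrices with parameters
`a = k + b`; it is an `N × N` matrix, `N = (k-1)*n + b`, given here as a (0-based)
`ℕ`-indexed family of entries.  For `1 ≤ j ≤ k-1` (1-based), the block rows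
`(j-1)(n-1)+1 .. j(n-1)` carry `Y_{[2,n]}` in columns `(j-1)n+1 .. jn` and (for `j ≥ 2`)
`X_{[2,n]}` in columns `(j-2)n+1 .. (j-1)n`; the last `a - 1` rows carry `X_{[2,a]}` in
columns `(k-2)n+1 .. (k-1)n` and `Y_{[2,a]}^{[1,b]}` in columns `(k-1)n+1 .. N`. -/
def stairCore {α : Type*} [Zero α] (n k : ℕ) (Xf Yf : ℕ → ℕ → α) : ℕ → ℕ → α := fun r c =>
  if r < (k - 1) * (n - 1) then
    if r / (n - 1) * n ≤ c ∧ c < r / (n - 1) * n + n then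
      Yf (r % (n - 1) + 1) (c - r / (n - 1) * n)
    else if 1 ≤ r / (n - 1) ∧ (r / (n - 1) - 1) * n ≤ c ∧ c < r / (n - 1) * n then
      Xf (r % (n - 1) + 1) (c - (r / (n - 1) - 1) * n)
    else 0
  else
    if (k - 2) * n ≤ c ∧ c < (k - 1) * n then
      Xf (r - (k - 1) * (n - 1) + 1) (c - (k - 2) * n)
    else if (k - 1) * n ≤ c then
      Yf (r - (k - 1) * (n - 1) + 1) (c - (k - 1) * n)
    else 0

/-- `det Ȳ`: determinant of the submatrix of `Y` on rows and columns `2..n` (1-based). -/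
def detYbar {α : Type*} [CommRing α] (n : ℕ) (Yf : ℕ → ℕ → α) : α :=
  (Matrix.of fun i j : Fin (n - 1) => Yf ((i : ℕ) + 1) ((j : ℕ) + 1)).det

/-- Determinant of the minor of `Y` on rows `{1, 3, 4, …, n}` and columns `{2, …, n}`
(1-based). -/
def detYgamma {α : Type*} [CommRing α] (n : ℕ) (Yf : ℕ → ℕ → α) : α :=
  (Matrix.of fun i j : Fin (n - 1) =>
    Yf (if (i : ℕ) = 0 then 0 else (i : ℕ) + 1) ((j : ℕ) + 1)).det

/-- `det (λ Y + μ X)` as a polynomial in the two variables `λ = X 0`, `μ = X 1`. -/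
def detLM {α : Type*} [CommRing α] (n : ℕ) (Xf Yf : ℕ → ℕ → α) :
    MvPolynomial (Fin 2) α :=
  Matrix.det
    (((MvPolynomial.X 0 : MvPolynomial (Fin 2) α) • (toSq n Yf).map (fun p => MvPolynomial.C p)
      + (MvPolynomial.X 1 : MvPolynomial (Fin 2) α) • (toSq n Xf).map (fun p => MvPolynomial.C p)
      : Matrix (Fin n) (Fin n) (MvPolynomial (Fin 2) α)))

/-- The block `Y2`: submatrix of `Y` on rows `k+1 .. k+b` and columns `1 .. b` (1-based). -/
def blockY2 (n k b : ℕ) (h : k + b ≤ n) (Y : Matrix (Fin n) (Fin n) ℂ) :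
    Matrix (Fin b) (Fin b) ℂ :=
  Matrix.of fun i j => Y ⟨k + (i : ℕ), by have := i.isLt; omega⟩ (Fin.castLE (by omega) j)

/-- The `k × k` matrix `U = W11 - Y1 Y2⁻¹ W21` attached to a staircase pair `(X, Y)`,
where `[[W11, W12], [W21, W22]]` is the `a × a` leading block of `X Y⁻¹` (`W11` of size
`k × k`) and `[Y1; Y2]` is the submatrix of `Y` on rows `1..a`, columns `1..b`. -/
def blockU (n k b : ℕ) (h : k + b ≤ n) (X Y : Matrix (Fin n) (Fin n) ℂ) :
    Matrix (Fin k) (Fin k) ℂ :=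
  (Matrix.of fun i j : Fin k =>
      (X * Y⁻¹) (Fin.castLE (by omega) i) (Fin.castLE (by omega) j))
    - (Matrix.of fun (i : Fin k) (j : Fin b) =>
          Y (Fin.castLE (by omega) i) (Fin.castLE (by omega) j))
      * (blockY2 n k b h Y)⁻¹
      * (Matrix.of fun (i : Fin b) (j : Fin k) =>
          (X * Y⁻¹) ⟨k + (i : ℕ), by have := i.isLt; omega⟩ (Fin.castLE (by omega) j))

/-- The standard basis vector `e_{m+1}` (so `basisVec k 0 = e_1`, `basisVec k 1 = e_2`). -/
def basisVec (k m : ℕ) : Fin k → ℂ := fun i => if (i : ℕ) = m then 1 else 0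

/-- The vector `v_γ = U (e_2 + γ e_1)`, with `γ` the ratio of the minor of `Y` on rows
`{1,3,…,n}`, columns `{2,…,n}` by `det Ȳ`. -/
def vGamma (n k b : ℕ) (h : k + b ≤ n) (X Y : ℕ → ℕ → ℂ) : Fin k → ℂ :=
  (blockU n k b h (toSq n X) (toSq n Y)).mulVec
    (basisVec k 1 + (detYgamma n Y / detYbar n Y) • basisVec k 0)

/-- The coefficient ring for the generic staircase pair: polynomials over `ℂ` in the
variables `x_{ij}` (tagged `true`) and `y_{ij}` (tagged `false`). -/
abbrev Rgen : Type := MvPolynomial (Bool × ℕ × ℕ) ℂ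

/-- The generic staircase matrix `X` (0-based): `x_{ij}` for `i < a`, `b ≤ j < n`, else `0`. -/
def genX (n a b : ℕ) : ℕ → ℕ → Rgen := fun i j =>
  if i < a ∧ b ≤ j ∧ j < n then MvPolynomial.X (true, i, j) else 0

/-- The generic staircase matrix `Y` (0-based): `y_{ij}` except in the zero block
(`i ≥ a`, `j < b`). -/
def genY (n a b : ℕ) : ℕ → ℕ → Rgen := fun i j =>
  if i < n ∧ j < n ∧ ¬(a ≤ i ∧ j < b) then MvPolynomial.X (false, i, j) else 0

/-- The coefficient ring for the generic band pair: polynomials over `ℂ` in variables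
`a_{ij}`. -/
abbrev Rband : Type := MvPolynomial (ℕ × ℕ) ℂ

/-- The generic band entries `a_{ij}` (1-based). -/
def genA : ℕ → ℕ → Rband := fun i j => MvPolynomial.X (i, j)

/-- The band matrix `X` (0-based indices) built from the entries `a_{ij}` (1-based):
`X_{i, n-k+i-1+s} = a_{s,i}` for `1 ≤ i ≤ k`, `1 ≤ s ≤ k+1-i` (1-based). -/
def bandX {α : Type*} [Zero α] (n k : ℕ) (a : ℕ → ℕ → α) : ℕ → ℕ → α := fun i j =>
  if i < k ∧ n - k + i ≤ j ∧ j < n then a (j + k + 1 - n - i) (i + 1) else 0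

/-- The band matrix `Y` (0-based indices) built from the entries `a_{ij}` (1-based):
`Y_{ij} = a_{k+1-i+j, i}` for `max(1, i-k) ≤ j ≤ i` (1-based), `0` otherwise. -/
def bandY {α : Type*} [Zero α] (n k : ℕ) (a : ℕ → ℕ → α) : ℕ → ℕ → α := fun i j =>
  if j ≤ i ∧ i ≤ j + k ∧ i < n then a (k + 1 + j - i) (i + 1) else 0

/-- Top-left `k × k` block of `X * Y⁻¹`. -/
def bandUblock (n k : ℕ) (h : k ≤ n) (Xm Ym : Matrix (Fin n) (Fin n) ℂ) :
    Matrix (Fin k) (Fin k) ℂ :=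
  Matrix.of fun i j => (Xm * Ym⁻¹) (Fin.castLE h i) (Fin.castLE h j)

/-- `K(A;u) = [u, Au, …, A^{k-1}u]`. -/
def Kmat (k : ℕ) (A : Matrix (Fin k) (Fin k) ℂ) (u : Fin k → ℂ) :
    Matrix (Fin k) (Fin k) ℂ :=
  Matrix.of fun i j => (A ^ (j : ℕ)).mulVec u i

/-- `K1(A;u,v) = [v, u, Au, …, A^{k-2}u]`. -/
def K1mat (k : ℕ) (A : Matrix (Fin k) (Fin k) ℂ) (u v : Fin k → ℂ) :
    Matrix (Fin k) (Fin k) ℂ :=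
  Matrix.of fun i j => if (j : ℕ) = 0 then v i else (A ^ ((j : ℕ) - 1)).mulVec u i

/-- `K2(A;u,v) = [Av, u, Au, …, A^{k-2}u]`. -/
def K2mat (k : ℕ) (A : Matrix (Fin k) (Fin k) ℂ) (u v : Fin k → ℂ) :
    Matrix (Fin k) (Fin k) ℂ :=
  Matrix.of fun i j => if (j : ℕ) = 0 then A.mulVec v i else (A ^ ((j : ℕ) - 1)).mulVec u i

/-- `w`: the last row of the classical adjoint of `K1(A;u,v)`. -/
def wRow (k : ℕ) (A : Matrix (Fin k) (Fin k) ℂ) (u v : Fin k → ℂ) : Fin k → ℂ :=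
  fun j => (K1mat k A u v).adjugate ⟨k - 1, by have := j.isLt; omega⟩ j

/-- `K*(A;u,v)`: the matrix with rows `w, wA, …, wA^{k-1}`. -/
def Kstar (k : ℕ) (A : Matrix (Fin k) (Fin k) ℂ) (u v : Fin k → ℂ) :
    Matrix (Fin k) (Fin k) ℂ :=
  Matrix.of fun i j => Matrix.vecMul (wRow k A u v) (A ^ (i : ℕ)) j

/-- Extend a `k × k` matrix by zero to an `ℕ`-indexed family of entries. -/
def extMat {α : Type*} [Zero α] (k : ℕ) (M : Matrix (Fin k) (Fin k) α) : ℕ → ℕ → α :=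
  fun i j => if h : i < k ∧ j < k then M ⟨i, h.1⟩ ⟨j, h.2⟩ else 0

/-! With `W = X Y⁻¹` we have `λY + μX = (λ + μW) Y`. The last `n - a` rows of `W` vanish, so
`det (λ + μW) = λ^(n-a) det (λ + μP)` for the leading `a × a` block `P` of `W`; and since the
first `b` columns of `X = W Y` vanish while `Y` is zero below row `a` in those columns,
`P [Y1; Y2] = 0`. Hence `P = C R` with `C` the first `k` columns of `P` and `R = [1 | -Y1 Y2⁻¹]`,
and the Sylvester identity `λ^k det (λ + μ C R) = λ^a det (λ + μ R C)`, where `R C = U`,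
finishes. -/

section

variable {R : Type*} [CommRing R]

open Polynomial in
theorem det_smul_one_add_smul_mul_comm {m n : Type*} [Fintype m] [Fintype n] [DecidableEq m]
    [DecidableEq n] (A : Matrix m n R) (B : Matrix n m R)
    (h : Fintype.card n ≤ Fintype.card m) (t s : R) :
    det (t • 1 + s • (A * B)) =
      t ^ (Fintype.card m - Fintype.card n) * det (t • 1 + s • (B * A)) := by
  have := congrArg (eval t) (charpoly_mul_comm_of_le (-(s • A)) B h)
  simpa [eval_charpoly, smul_one_eq_diagonal, sub_eq_add_neg, Matrix.smul_mul, Matrix.mul_smul]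
    using this

theorem mul_eq_submatrix_mul_submatrix_of_rows_eq_zero {l m n κ : Type*} [Fintype m]
    [Fintype κ] (M : Matrix l m R) (A : Matrix m n R) {f : κ → m} (hf : Function.Injective f)
    (hA : ∀ i ∉ Set.range f, ∀ j, A i j = 0) :
    M * A = M.submatrix id f * A.submatrix f id := by
  ext i j
  simp only [mul_apply, submatrix_apply, id]
  exact (Fintype.sum_of_injective f hf _ _ (fun x hx => by simp [hA x hx]) fun _ => rfl).symm

theorem det_smul_one_add_smul_of_rows_eq_zero {m κ : Type*} [Fintype m] [Fintype κ]
    [DecidableEq m] [DecidableEq κ] (W : Matrix m m R) {f : κ → m} (hf : Function.Injective f)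
    (hW : ∀ i ∉ Set.range f, ∀ j, W i j = 0) (t s : R) :
    det (t • 1 + s • W) =
      t ^ (Fintype.card m - Fintype.card κ) * det (t • 1 + s • W.submatrix f f) := by
  conv_lhs => rw [← Matrix.one_mul W, mul_eq_submatrix_mul_submatrix_of_rows_eq_zero 1 W hf hW]
  rw [det_smul_one_add_smul_mul_comm _ _ (Fintype.card_le_of_injective f hf),
    ← submatrix_mul _ _ _ _ _ Function.bijective_id, Matrix.mul_one]

theorem submatrix_mul_submatrix_eq_zero_of_rows_eq_zero {m n κ ν : Type*} [Fintype m]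
    [Fintype κ] (W : Matrix m m R) (Y : Matrix m n R) {f : κ → m} (hf : Function.Injective f)
    {g : ν → n} (hY : ∀ i ∉ Set.range f, ∀ j, Y i (g j) = 0)
    (hWY : ∀ i j, (W * Y) i (g j) = 0) :
    W.submatrix f f * Y.submatrix f g = 0 := by
  calc W.submatrix f f * Y.submatrix f g = W.submatrix f id * Y.submatrix id g := by
        rw [mul_eq_submatrix_mul_submatrix_of_rows_eq_zero (W.submatrix f id) (Y.submatrix id g)
          hf hY]
        simp only [submatrix_submatrix, Function.comp_id, Function.id_comp]
    _ = (W * Y).submatrix f g := by rw [← submatrix_mul _ _ _ _ _ Function.bijective_id]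
    _ = 0 := by ext i j; exact hWY _ _

theorem det_smul_one_add_smul_of_mul_fromRows_eq_zero {κ β : Type*} [Fintype κ] [Fintype β]
    [DecidableEq κ] [DecidableEq β] (P : Matrix (κ ⊕ β) (κ ⊕ β) R) (Y₁ : Matrix κ β R)
    (Y₂ : Matrix β β R) (hY₂ : IsUnit Y₂.det) (hP : P * fromRows Y₁ Y₂ = 0) (t s : R) :
    det (t • 1 + s • P) =
      t ^ Fintype.card β * det (t • 1 + s • (P.toBlocks₁₁ - Y₁ * Y₂⁻¹ * P.toBlocks₂₁)) := by
  have hcols : P.toCols₂ = -(P.toCols₁ * Y₁ * Y₂⁻¹) := by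
    rw [← fromCols_toCols P, fromCols_mul_fromRows, add_eq_zero_iff_eq_neg] at hP
    rw [← Matrix.mul_nonsing_inv_cancel_right Y₂ P.toCols₂ hY₂]
    simp [hP, Matrix.neg_mul]
  have hfactor : P = P.toCols₁ * fromCols (1 : Matrix κ κ R) (-(Y₁ * Y₂⁻¹)) := by
    rw [mul_fromCols, Matrix.mul_one, Matrix.mul_neg, ← Matrix.mul_assoc, ← hcols,
      fromCols_toCols]
  have hschur : fromCols (1 : Matrix κ κ R) (-(Y₁ * Y₂⁻¹)) * P.toCols₁ =
      P.toBlocks₁₁ - Y₁ * Y₂⁻¹ * P.toBlocks₂₁ := by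
    rw [← fromRows_toRows P.toCols₁, fromCols_mul_fromRows, Matrix.one_mul, Matrix.neg_mul,
      ← sub_eq_add_neg]
    rfl
  conv_lhs => rw [hfactor]
  rw [det_smul_one_add_smul_mul_comm _ _ (by simp), hschur]
  simp

end

theorem statement0_general (n k b : ℕ) (hn : k + b ≤ n)
    (X Y : ℕ → ℕ → ℂ)
    (hX : ∀ i j : ℕ, (k + b ≤ i ∨ j < b) → X i j = 0)
    (hY : ∀ i j : ℕ, k + b ≤ i → j < b → Y i j = 0)
    (hYinv : IsUnit (toSq n Y).det)
    (hY2inv : IsUnit (blockY2 n k b hn (toSq n Y)).det) :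
    ∀ lam mu : ℂ,
      (lam • toSq n Y + mu • toSq n X).det
        = lam ^ (n - k) * (toSq n Y).det
          * (lam • (1 : Matrix (Fin k) (Fin k) ℂ)
              + mu • blockU n k b hn (toSq n X) (toSq n Y)).det := by
  intro lam mu
  set W := toSq n X * (toSq n Y)⁻¹
  have hWY : W * toSq n Y = toSq n X := nonsing_inv_mul_cancel_right _ _ hYinv
  let f : Fin k ⊕ Fin b → Fin n := Fin.castLE hn ∘ finSumFinEquiv
  let g : Fin b → Fin n := Fin.castLE (by omega)
  have hf : Function.Injective f := (Fin.castLE_injective hn).comp finSumFinEquiv.injective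
  have hlow : ∀ i ∉ Set.range f, k + b ≤ (i : ℕ) := fun i hi => by
    rwa [Set.range_comp, EquivLike.range_eq_univ, Set.image_univ, Fin.range_castLE,
      Set.mem_ofPred_eq, not_lt] at hi
  have hWrows : ∀ i ∉ Set.range f, ∀ j, W i j = 0 := fun i hi j => by
    simp [W, mul_apply, toSq, hX i _ (Or.inl (hlow i hi))]
  have hPY : W.submatrix f f * (toSq n Y).submatrix f g = 0 :=
    submatrix_mul_submatrix_eq_zero_of_rows_eq_zero _ _ hf (fun i hi j => hY i j (hlow i hi) j.2)
      fun i j => by rw [hWY]; exact hX i j (Or.inr j.2)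
  have hYcols : (toSq n Y).submatrix f g =
      fromRows ((toSq n Y).submatrix (Fin.castLE (by omega)) g)
        (blockY2 n k b hn (toSq n Y)) := by
    ext (i | i) j <;> rfl
  have hU : (W.submatrix f f).toBlocks₁₁ - (toSq n Y).submatrix (Fin.castLE (by omega)) g *
      (blockY2 n k b hn (toSq n Y))⁻¹ * (W.submatrix f f).toBlocks₂₁ =
      blockU n k b hn (toSq n X) (toSq n Y) := rfl
  calc (lam • toSq n Y + mu • toSq n X).det
      = (lam • 1 + mu • W).det * (toSq n Y).det := by
        rw [← det_mul, Matrix.add_mul, Matrix.smul_mul, Matrix.smul_mul, Matrix.one_mul, hWY]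
    _ = lam ^ (n - (k + b)) * (lam • 1 + mu • W.submatrix f f).det * (toSq n Y).det := by
        rw [det_smul_one_add_smul_of_rows_eq_zero W hf hWrows, Fintype.card_fin,
          Fintype.card_sum, Fintype.card_fin, Fintype.card_fin]
    _ = _ := by
        rw [det_smul_one_add_smul_of_mul_fromRows_eq_zero _ _ _ hY2inv (hYcols ▸ hPY),
          Fintype.card_fin, hU, show n - k = n - (k + b) + b by omega, pow_add]
        ring

/-- for a staircase pair of complex matrices with `Y` and `Y2` invertible,
`det(λY + μX) = λ^(n-k) · det Y · det(λ 1_k + μ U)`. -/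
theorem statement0 (n k b : ℕ) (hk : 2 ≤ k) (hn : k + b ≤ n)
    (X Y : ℕ → ℕ → ℂ)
    (hX : ∀ i j : ℕ, (k + b ≤ i ∨ j < b) → X i j = 0)
    (hY : ∀ i j : ℕ, k + b ≤ i → j < b → Y i j = 0)
    (hYinv : IsUnit (toSq n Y).det)
    (hY2inv : IsUnit (blockY2 n k b hn (toSq n Y)).det) :
    ∀ lam mu : ℂ,
      (lam • toSq n Y + mu • toSq n X).det
        = lam ^ (n - k) * (toSq n Y).det
          * (lam • (1 : Matrix (Fin k) (Fin k) ℂ)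
              + mu • blockU n k b hn (toSq n X) (toSq n Y)).det :=
  statement0_general n k b hn X Y hX hY hYinv hY2inv
end
end

section
/- In the generic staircase situation, the polynomial det(λY + μX), viewed as an element of R[λ, μ], is divisible by λ^{n−k}: there exist unique polynomials c_0, …, c_k ∈ R such that det(λY + μX) = λ^{n−k} · Σ_{i=0}^{k} c_i μ^i λ^{k−i} in R[λ, μ]; moreover c_0 = det Y. -/
open Matrix Finset

noncomputable section

namespace Statement1Aux

open MvPolynomial

lemma card_filt (n m : ℕ) (h : m ≤ n) :
    (Finset.univ.filter fun i : Fin n => (i : ℕ) < m).card = m := by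
  rcases eq_or_lt_of_le h with rfl | hm
  · rw [Finset.filter_true_of_mem (fun i _ => i.isLt), Finset.card_univ, Fintype.card_fin]
  · have : (Finset.univ.filter fun i : Fin n => (i : ℕ) < m) = Finset.Iio ⟨m, hm⟩ := by
      ext i; simp [Fin.lt_def]
    rw [this, Fin.card_Iio]

lemma prod_ite_one_card {R : Type*} [CommMonoid R] {n : ℕ} (P : Fin n → Prop) [DecidablePred P]
    (x : R) : (∏ i : Fin n, if P i then x else 1) = x ^ (Finset.univ.filter P).card := by
  rw [Finset.prod_ite, Finset.prod_const, Finset.prod_const_one, mul_one]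

lemma mexp_apply_one (k i : ℕ) :
    ((Finsupp.single (1 : Fin 2) i + Finsupp.single 0 (k - i) : Fin 2 →₀ ℕ)) 1 = i := by
  rw [Finsupp.add_apply, Finsupp.single_apply, Finsupp.single_apply]; simp

lemma mexp_apply_zero (k i : ℕ) :
    ((Finsupp.single (1 : Fin 2) i + Finsupp.single 0 (k - i) : Fin 2 →₀ ℕ)) 0 = k - i := by
  rw [Finsupp.add_apply, Finsupp.single_apply, Finsupp.single_apply]; simp

lemma degree_two (m : Fin 2 →₀ ℕ) : m.degree = m 0 + m 1 := by
  have : m.degree = ∑ i : Fin 2, m i :=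
    Finset.sum_subset (Finset.subset_univ _)
      (fun x _ hx => Finsupp.notMem_support_iff.mp hx)
  rw [this, Fin.sum_univ_two]

lemma mono_eq {R : Type*} [CommSemiring R] (r : R) (i j : ℕ) :
    C r * (X 1 : MvPolynomial (Fin 2) R) ^ i * X 0 ^ j
      = monomial (Finsupp.single 1 i + Finsupp.single 0 j) r := by
  rw [X_pow_eq_monomial, X_pow_eq_monomial, C_mul_monomial, monomial_mul, mul_one, mul_one]

lemma coeff_sum_form {R : Type*} [CommSemiring R] {k : ℕ} (c : Fin (k+1) → R) (i0 : Fin (k+1)) :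
    MvPolynomial.coeff (Finsupp.single 1 (i0 : ℕ) + Finsupp.single 0 (k - (i0 : ℕ)))
      (∑ i : Fin (k+1), C (c i) * (X 1 : MvPolynomial (Fin 2) R) ^ (i : ℕ) * X 0 ^ (k - (i : ℕ)))
      = c i0 := by
  simp_rw [mono_eq]
  rw [MvPolynomial.coeff_sum]
  rw [Finset.sum_eq_single i0]
  · rw [coeff_monomial, if_pos rfl]
  · intro j _ hj
    rw [coeff_monomial, if_neg]
    intro h
    apply hj
    have := congrArg (fun f : Fin 2 →₀ ℕ => f 1) h
    simp only [mexp_apply_one] at this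
    exact Fin.ext this
  · intro h; exact absurd (Finset.mem_univ i0) h

lemma homog_decomp {R : Type*} [CommSemiring R] {k : ℕ} {p : MvPolynomial (Fin 2) R}
    (hp : p.IsHomogeneous k) :
    p = ∑ i : Fin (k+1),
        C (MvPolynomial.coeff (Finsupp.single 1 (i : ℕ) + Finsupp.single 0 (k - (i : ℕ))) p)
          * (X 1 : MvPolynomial (Fin 2) R) ^ (i : ℕ) * X 0 ^ (k - (i : ℕ)) := by
  apply MvPolynomial.ext
  intro m
  simp_rw [mono_eq]
  rw [MvPolynomial.coeff_sum]
  simp_rw [coeff_monomial]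
  symm
  by_cases hd : m.degree = k
  · have h0 : m 0 + m 1 = k := by rw [← degree_two, hd]
    set i0 : Fin (k+1) := ⟨m 1, by omega⟩ with hi0
    have meq : (Finsupp.single (1 : Fin 2) (i0 : ℕ) + Finsupp.single 0 (k - (i0 : ℕ))
        : Fin 2 →₀ ℕ) = m := by
      apply Finsupp.ext
      intro x
      have e0 := mexp_apply_zero k (i0 : ℕ)
      have e1 := mexp_apply_one k (i0 : ℕ)
      have h2 : k - (i0 : ℕ) = m 0 := by simp only [hi0]; omega
      fin_cases x
      · exact e0.trans h2
      · exact e1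
    rw [Finset.sum_eq_single i0]
    · rw [if_pos meq, meq]
    · intro j _ hj
      rw [if_neg]
      intro h
      apply hj
      apply Fin.ext
      have := congrArg (fun f : Fin 2 →₀ ℕ => f 1) h
      simp only [mexp_apply_one] at this
      rw [this, ← mexp_apply_one k (i0 : ℕ), meq]
    · intro h; exact absurd (Finset.mem_univ i0) h
  · rw [hp.coeff_eq_zero hd]
    apply Finset.sum_eq_zero
    intro j _
    rw [if_neg]
    intro h
    apply hd
    rw [← h, degree_two, mexp_apply_zero, mexp_apply_one]
    have : (j : ℕ) ≤ k := by omega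
    omega

lemma isHomog_smul_units {R σ : Type*} [CommRing R] {p : MvPolynomial σ R} {n : ℕ}
    (z : ℤˣ) (h : p.IsHomogeneous n) : (z • p).IsHomogeneous n := by
  have : (z • p) = C ((z : ℤ) : R) * p := by
    rw [Units.smul_def, zsmul_eq_mul]
    congr 1
  rw [this]
  simpa using (isHomogeneous_C σ (((z : ℤ) : R))).mul h

end Statement1Aux

namespace Statement1Aux

open MvPolynomial

/-- The matrix `λY + μX` for the generic staircase pair. -/
def Mstair (n a b : ℕ) : Matrix (Fin n) (Fin n) (MvPolynomial (Fin 2) Rgen) :=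
  (MvPolynomial.X 0 : MvPolynomial (Fin 2) Rgen) • (toSq n (genY n a b)).map
      (fun p => MvPolynomial.C p)
    + (MvPolynomial.X 1 : MvPolynomial (Fin 2) Rgen) • (toSq n (genX n a b)).map
      (fun p => MvPolynomial.C p)

/-- The reduced matrix `N`. -/
def Nstair (n a b : ℕ) : Matrix (Fin n) (Fin n) (MvPolynomial (Fin 2) Rgen) :=
  Matrix.of fun i j => if (i : ℕ) < a ∧ b ≤ (j : ℕ) then Mstair n a b i j
    else C (genY n a b (i : ℕ) (j : ℕ))

lemma Mstair_apply (n a b : ℕ) (i j : Fin n) :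
    Mstair n a b i j
      = X 0 * C (genY n a b (i : ℕ) (j : ℕ)) + X 1 * C (genX n a b (i : ℕ) (j : ℕ)) := by
  simp [Mstair, toSq, Matrix.smul_apply, Matrix.map_apply, smul_eq_mul]

lemma detLM_eq (n a b : ℕ) : detLM n (genX n a b) (genY n a b) = (Mstair n a b).det := rfl

lemma genX_zero (n a b : ℕ) (i j : ℕ) (h : a ≤ i ∨ j < b) : genX n a b i j = 0 := by
  simp only [genX]; rw [if_neg (by omega)]

lemma genY_zero (n a b : ℕ) (i j : ℕ) (h : a ≤ i ∧ j < b) : genY n a b i j = 0 := by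
  simp only [genY]; rw [if_neg (by omega)]

lemma key1 (n k b : ℕ) (hn : k + b ≤ n) :
    (Mstair n (k+b) b).det
      = (X 0 : MvPolynomial (Fin 2) Rgen) ^ (n - k) * (Nstair n (k+b) b).det := by
  classical
  have hM : Mstair n (k+b) b = Matrix.of (fun i j : Fin n =>
      (if k+b ≤ (i : ℕ) then (X 0 : MvPolynomial (Fin 2) Rgen) else 1) *
        (Matrix.of fun i j : Fin n =>
          (if (j : ℕ) < b then (X 0 : MvPolynomial (Fin 2) Rgen) else 1)
            * Nstair n (k+b) b i j) i j) := by
    ext i j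
    simp only [Matrix.of_apply, Nstair]
    by_cases hi : (i : ℕ) < k + b <;> by_cases hj : (j : ℕ) < b
    · rw [if_neg (by omega), one_mul, if_pos hj, if_neg (by omega)]
      rw [Mstair_apply, genX_zero n (k+b) b _ _ (Or.inr hj), map_zero, mul_zero, add_zero]
    · rw [if_neg (by omega), one_mul, if_neg hj, one_mul, if_pos ⟨hi, by omega⟩]
    · rw [if_pos (by omega), if_pos hj, if_neg (by omega)]
      rw [Mstair_apply, genX_zero n (k+b) b _ _ (Or.inr hj), map_zero, mul_zero, add_zero]
      rw [genY_zero n (k+b) b _ _ ⟨by omega, hj⟩, map_zero, mul_zero, mul_zero]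
    · rw [if_pos (by omega), if_neg hj, one_mul, if_neg (by omega)]
      rw [Mstair_apply, genX_zero n (k+b) b _ _ (Or.inl (by omega)), map_zero, mul_zero,
        add_zero]
  rw [hM, Matrix.det_mul_column, Matrix.det_mul_row]
  rw [prod_ite_one_card, prod_ite_one_card]
  have h1 : (Finset.univ.filter fun i : Fin n => k + b ≤ (i : ℕ)).card = n - (k+b) := by
    have heq : (Finset.univ.filter fun i : Fin n => k + b ≤ (i : ℕ))
        = Finset.univ \ (Finset.univ.filter fun i : Fin n => (i : ℕ) < k + b) := by
      ext i
      simp only [Finset.mem_filter, Finset.mem_sdiff, Finset.mem_univ, true_and]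
      omega
    rw [heq, Finset.card_sdiff_of_subset (Finset.filter_subset _ _), Finset.card_univ, Fintype.card_fin,
      card_filt n (k+b) hn]
  have h2 : (Finset.univ.filter fun j : Fin n => (j : ℕ) < b).card = b :=
    card_filt n b (by omega)
  rw [h1, h2, ← mul_assoc, ← pow_add]
  congr 2
  omega

lemma key2 (n k b : ℕ) (hn : k + b ≤ n) :
    ((Nstair n (k+b) b).det).IsHomogeneous k := by
  classical
  rw [Matrix.det_apply]
  apply MvPolynomial.IsHomogeneous.sum
  intro σ _
  by_cases hcase : ∀ j : Fin n, (j : ℕ) < b → ((σ j : Fin n) : ℕ) < k + b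
  · apply isHomog_smul_units
    have hprod := MvPolynomial.IsHomogeneous.prod Finset.univ
        (fun j : Fin n => Nstair n (k+b) b (σ j) j)
        (fun j : Fin n => if ((σ j : Fin n) : ℕ) < k + b ∧ b ≤ (j : ℕ) then 1 else 0) ?_
    · have hA : (Finset.univ.filter fun j : Fin n => ((σ j : Fin n) : ℕ) < k + b).card
          = k + b := by
        have hbij : (Finset.univ.filter fun j : Fin n => ((σ j : Fin n) : ℕ) < k + b).card
            = (Finset.univ.filter fun i : Fin n => (i : ℕ) < k + b).card := by
          apply Finset.card_bij (fun j _ => σ j)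
          · intro j hj
            simp only [Finset.mem_filter, Finset.mem_univ, true_and] at hj ⊢
            exact hj
          · intro j1 _ j2 _ h
            exact σ.injective h
          · intro i hi
            refine ⟨σ.symm i, ?_, by simp⟩
            simp only [Finset.mem_filter, Finset.mem_univ, true_and] at hi ⊢
            simpa using hi
        rw [hbij, card_filt n (k+b) hn]
      have hsum : (∑ j : Fin n,
          if ((σ j : Fin n) : ℕ) < k + b ∧ b ≤ (j : ℕ) then 1 else 0) = k := by
        rw [Finset.sum_ite, Finset.sum_const, Finset.sum_const_zero, add_zero, smul_eq_mul,
          mul_one]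
        have hsplit : (Finset.univ.filter
              fun j : Fin n => ((σ j : Fin n) : ℕ) < k + b ∧ b ≤ (j : ℕ))
            = (Finset.univ.filter fun j : Fin n => ((σ j : Fin n) : ℕ) < k + b)
              \ (Finset.univ.filter fun j : Fin n => (j : ℕ) < b) := by
          ext j
          simp only [Finset.mem_filter, Finset.mem_sdiff, Finset.mem_univ, true_and]
          omega
        rw [hsplit, Finset.card_sdiff_of_subset, hA, card_filt n b (by omega)]
        · omega
        · intro j hj
          simp only [Finset.mem_filter, Finset.mem_univ, true_and] at hj ⊢
          exact hcase j hj
      rw [hsum] at hprod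
      exact hprod
    · intro j _
      show (Nstair n (k+b) b (σ j) j).IsHomogeneous
        (if ((σ j : Fin n) : ℕ) < k + b ∧ b ≤ (j : ℕ) then 1 else 0)
      by_cases hc : ((σ j : Fin n) : ℕ) < k + b ∧ b ≤ (j : ℕ)
      · rw [if_pos hc]
        have hNM : Nstair n (k+b) b (σ j) j = Mstair n (k+b) b (σ j) j := by
          simp only [Nstair, Matrix.of_apply, if_pos hc]
        rw [hNM, Mstair_apply]
        have h1 : ((X 0 : MvPolynomial (Fin 2) Rgen)
            * C (genY n (k+b) b ((σ j : Fin n) : ℕ) (j : ℕ))).IsHomogeneous 1 := by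
          simpa using (MvPolynomial.isHomogeneous_X _ (0 : Fin 2)).mul
            (MvPolynomial.isHomogeneous_C _ (genY n (k+b) b ((σ j : Fin n) : ℕ) (j : ℕ)))
        have h2 : ((X 1 : MvPolynomial (Fin 2) Rgen)
            * C (genX n (k+b) b ((σ j : Fin n) : ℕ) (j : ℕ))).IsHomogeneous 1 := by
          simpa using (MvPolynomial.isHomogeneous_X _ (1 : Fin 2)).mul
            (MvPolynomial.isHomogeneous_C _ (genX n (k+b) b ((σ j : Fin n) : ℕ) (j : ℕ)))
        exact h1.add h2
      · rw [if_neg hc]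
        have hNY : Nstair n (k+b) b (σ j) j
            = C (genY n (k+b) b ((σ j : Fin n) : ℕ) (j : ℕ)) := by
          simp only [Nstair, Matrix.of_apply, if_neg hc]
        rw [hNY]
        exact MvPolynomial.isHomogeneous_C _ _
  · push_neg at hcase
    obtain ⟨j, hj, hσj⟩ := hcase
    have hzero : Nstair n (k+b) b (σ j) j = 0 := by
      simp only [Nstair, Matrix.of_apply]
      rw [if_neg (by omega), genY_zero n (k+b) b _ _ ⟨by omega, hj⟩, map_zero]
    rw [show (∏ i : Fin n, Nstair n (k+b) b (σ i) i) = 0 from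
      Finset.prod_eq_zero (Finset.mem_univ j) hzero, smul_zero]
    exact MvPolynomial.isHomogeneous_zero _ _ _

end Statement1Aux

/-- for the generic staircase pair, `det(λY + μX)` is divisible by
`λ^(n-k)`, with uniquely determined coefficients `c_0, …, c_k`, and `c_0 = det Y`. -/
theorem statement1 (n k b : ℕ) (hk : 2 ≤ k) (hn : k + b ≤ n) :
    (∃! c : Fin (k + 1) → Rgen,
      detLM n (genX n (k + b) b) (genY n (k + b) b)
        = (MvPolynomial.X 0 : MvPolynomial (Fin 2) Rgen) ^ (n - k)
          * ∑ i : Fin (k + 1), MvPolynomial.C (c i)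
              * (MvPolynomial.X 1 : MvPolynomial (Fin 2) Rgen) ^ (i : ℕ)
              * (MvPolynomial.X 0 : MvPolynomial (Fin 2) Rgen) ^ (k - (i : ℕ)))
    ∧ ∀ c : Fin (k + 1) → Rgen,
        detLM n (genX n (k + b) b) (genY n (k + b) b)
          = (MvPolynomial.X 0 : MvPolynomial (Fin 2) Rgen) ^ (n - k)
            * ∑ i : Fin (k + 1), MvPolynomial.C (c i)
                * (MvPolynomial.X 1 : MvPolynomial (Fin 2) Rgen) ^ (i : ℕ)
                * (MvPolynomial.X 0 : MvPolynomial (Fin 2) Rgen) ^ (k - (i : ℕ)) →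
        c ⟨0, by omega⟩ = (toSq n (genY n (k + b) b)).det := by
  classical
  obtain ⟨key1, key2, detLM_eq, coeff_sum_form, homog_decomp⟩ :=
    And.intro (Statement1Aux.key1 n k b hn) (And.intro (Statement1Aux.key2 n k b hn)
      (And.intro (Statement1Aux.detLM_eq n (k+b) b)
        (And.intro (@Statement1Aux.coeff_sum_form Rgen _ k)
          (@Statement1Aux.homog_decomp Rgen _ k))))
  set c0 : Fin (k+1) → Rgen := fun i =>
    MvPolynomial.coeff (Finsupp.single 1 (i : ℕ) + Finsupp.single 0 (k - (i : ℕ)))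
      (Statement1Aux.Nstair n (k+b) b).det with hc0
  have hexist : detLM n (genX n (k + b) b) (genY n (k + b) b)
      = (MvPolynomial.X 0 : MvPolynomial (Fin 2) Rgen) ^ (n - k)
        * ∑ i : Fin (k + 1), MvPolynomial.C (c0 i)
            * (MvPolynomial.X 1 : MvPolynomial (Fin 2) Rgen) ^ (i : ℕ)
            * (MvPolynomial.X 0 : MvPolynomial (Fin 2) Rgen) ^ (k - (i : ℕ)) := by
    rw [detLM_eq, key1]
    congr 1
    exact homog_decomp key2
  have hXpow_ne : ((MvPolynomial.X 0 : MvPolynomial (Fin 2) Rgen) ^ (n - k)) ≠ 0 :=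
    pow_ne_zero _ (MvPolynomial.X_ne_zero _)
  have huniq : ∀ c' : Fin (k+1) → Rgen,
      detLM n (genX n (k + b) b) (genY n (k + b) b)
        = (MvPolynomial.X 0 : MvPolynomial (Fin 2) Rgen) ^ (n - k)
          * ∑ i : Fin (k + 1), MvPolynomial.C (c' i)
              * (MvPolynomial.X 1 : MvPolynomial (Fin 2) Rgen) ^ (i : ℕ)
              * (MvPolynomial.X 0 : MvPolynomial (Fin 2) Rgen) ^ (k - (i : ℕ)) → c' = c0 := by
    intro c' h'
    have hcc : (∑ i : Fin (k + 1), MvPolynomial.C (c' i)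
          * (MvPolynomial.X 1 : MvPolynomial (Fin 2) Rgen) ^ (i : ℕ)
          * (MvPolynomial.X 0 : MvPolynomial (Fin 2) Rgen) ^ (k - (i : ℕ)))
        = ∑ i : Fin (k + 1), MvPolynomial.C (c0 i)
          * (MvPolynomial.X 1 : MvPolynomial (Fin 2) Rgen) ^ (i : ℕ)
          * (MvPolynomial.X 0 : MvPolynomial (Fin 2) Rgen) ^ (k - (i : ℕ)) :=
      mul_left_cancel₀ hXpow_ne (h'.symm.trans hexist)
    funext i
    rw [← coeff_sum_form c' i, ← coeff_sum_form c0 i, hcc]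
  refine ⟨⟨c0, hexist, huniq⟩, ?_⟩
  intro c hcid
  set φ : MvPolynomial (Fin 2) Rgen →ₐ[Rgen] MvPolynomial (Fin 2) Rgen :=
    MvPolynomial.aeval ![MvPolynomial.X 0, 0] with hφ
  have hφ0 : φ (MvPolynomial.X 0) = MvPolynomial.X 0 := by simp [hφ]
  have hφ1 : φ (MvPolynomial.X 1) = 0 := by simp [hφ]
  have hφC : ∀ r : Rgen, φ (MvPolynomial.C r) = MvPolynomial.C r := by
    intro r
    simp [hφ, MvPolynomial.algebraMap_eq]
  have happ := congrArg φ hcid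
  rw [detLM_eq] at happ
  have hL : φ ((Statement1Aux.Mstair n (k+b) b).det)
      = (MvPolynomial.X 0 : MvPolynomial (Fin 2) Rgen) ^ n
        * MvPolynomial.C ((toSq n (genY n (k + b) b)).det) := by
    rw [AlgHom.map_det φ, AlgHom.mapMatrix_apply]
    have hmap : (Statement1Aux.Mstair n (k+b) b).map ⇑φ
        = (MvPolynomial.X 0 : MvPolynomial (Fin 2) Rgen)
            • (toSq n (genY n (k + b) b)).map (fun p => MvPolynomial.C p) := by
      refine Matrix.ext fun i j => ?_
      rw [Matrix.map_apply, Statement1Aux.Mstair_apply]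
      simp only [_root_.map_add, _root_.map_mul, hφ0, hφ1, hφC,
        zero_mul, add_zero, Matrix.smul_apply, Matrix.map_apply, smul_eq_mul, toSq,
        Matrix.of_apply]
    rw [hmap, Matrix.det_smul, Fintype.card_fin]
    congr 1
    exact (RingHom.map_det (MvPolynomial.C : Rgen →+* MvPolynomial (Fin 2) Rgen) _).symm
  have hR : φ ((MvPolynomial.X 0 : MvPolynomial (Fin 2) Rgen) ^ (n - k)
        * ∑ i : Fin (k + 1), MvPolynomial.C (c i)
            * (MvPolynomial.X 1 : MvPolynomial (Fin 2) Rgen) ^ (i : ℕ)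
            * (MvPolynomial.X 0 : MvPolynomial (Fin 2) Rgen) ^ (k - (i : ℕ)))
      = (MvPolynomial.X 0 : MvPolynomial (Fin 2) Rgen) ^ n
        * MvPolynomial.C (c ⟨0, by omega⟩) := by
    rw [_root_.map_mul, map_pow, hφ0, map_sum]
    have hterm : (∑ i : Fin (k + 1), φ (MvPolynomial.C (c i)
          * (MvPolynomial.X 1 : MvPolynomial (Fin 2) Rgen) ^ (i : ℕ)
          * (MvPolynomial.X 0 : MvPolynomial (Fin 2) Rgen) ^ (k - (i : ℕ))))
        = MvPolynomial.C (c ⟨0, by omega⟩)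
            * (MvPolynomial.X 0 : MvPolynomial (Fin 2) Rgen) ^ k := by
      rw [Finset.sum_eq_single (⟨0, by omega⟩ : Fin (k+1))]
      · simp only [_root_.map_mul, map_pow, hφ0, hφ1, hφC]
        norm_num
      · intro j _ hj
        have hj' : (j : ℕ) ≠ 0 := by
          intro h
          exact hj (Fin.ext h)
        simp only [_root_.map_mul, map_pow, hφ0, hφ1, hφC, zero_pow hj', mul_zero, zero_mul]
      · intro h
        exact absurd (Finset.mem_univ _) h
    rw [hterm, ← mul_assoc, mul_comm ((MvPolynomial.X 0 : MvPolynomial (Fin 2) Rgen) ^ (n-k))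
      (MvPolynomial.C (c ⟨0, by omega⟩)), mul_assoc, ← pow_add]
    rw [mul_comm]
    congr 2
    omega
  rw [hL, hR] at happ
  have hXn : ((MvPolynomial.X 0 : MvPolynomial (Fin 2) Rgen) ^ n) ≠ 0 :=
    pow_ne_zero _ (MvPolynomial.X_ne_zero _)
  have := mul_left_cancel₀ hXn happ
  exact (MvPolynomial.C_injective _ _ this).symm


end
end

section
/- Assume k = 2. In the generic band situation there exists a polynomial φ̃_1* ∈ R such that φ̃_1 · φ̃_1* = a_{31}a_{12} · φ̃_2² + c̃_1 · φ̃_2 + a_{11}a_{13}⋯a_{1n} · a_{32}⋯a_{3n}, where c̃_1 = (−1)^{n−1} c_1. -/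
open Matrix Finset

noncomputable section

/-!
Rows `2, …, n` of the band matrix `Y` form a tridiagonal matrix `T` (`bandYTail`), and `φ̃_1`,
`φ̃_2` are its principal minors on the indices `1, …, n - 1` and `2, …, n - 1`. At `λ = 1`, `c_1`
is the coefficient of `μ` in `det (Y + μ X)`; since only the first two rows of `X` are nonzero,
it is the sum of the determinants of `Y` with its first, resp. second, row replaced by that of
`X`. Moving the replaced row to the bottom (for the second one after expanding along the first
row `(a_{31}, 0, …, 0)`) makes both determinants tridiagonal, which gives
`c̃_1 = a_{21} φ̃_1 - a_{11} a_{3n} D - a_{31} a_{12} φ̃_2` with `D` the minor of `T` on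
`1, …, n - 2`. The Desnanot–Jacobi identity `φ̃_1 D' - D φ̃_2 = -∏_{j=2}^{n-1} a_{3j} a_{1,j+1}`
for tridiagonal determinants (`D'` the minor on `2, …, n - 2`) then yields the relation with
`φ̃_1* = a_{21} φ̃_2 - a_{11} a_{3n} D'`.
-/

section Window

variable {α : Type*}

def window (f : ℕ → ℕ → α) (o m : ℕ) : Matrix (Fin m) (Fin m) α :=
  Matrix.of fun r c => f (o + r) (o + c)

@[simp]
theorem window_apply (f : ℕ → ℕ → α) (o m : ℕ) (r c : Fin m) :
    window f o m r c = f (o + r) (o + c) :=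
  rfl

theorem window_congr {f g : ℕ → ℕ → α} {o m : ℕ}
    (h : ∀ r c, o ≤ r → r < o + m → o ≤ c → c < o + m → f r c = g r c) :
    window f o m = window g o m := by
  ext r c
  exact h _ _ (by omega) (by omega) (by omega) (by omega)

theorem submatrix_succ_window (f : ℕ → ℕ → α) (o m : ℕ) :
    (window f o (m + 1)).submatrix Fin.succ Fin.succ = window f (o + 1) m := by
  ext r c
  simp only [window, submatrix_apply, of_apply, Fin.val_succ]
  ring_nf

theorem submatrix_castSucc_window (f : ℕ → ℕ → α) (o m : ℕ) :
    (window f o (m + 1)).submatrix Fin.castSucc Fin.castSucc = window f o m :=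
  rfl

theorem updateRow_toSq_eq_window {n : ℕ} (Xf Yf : ℕ → ℕ → α) (i : Fin n) :
    (toSq n Yf).updateRow i (toSq n Xf i) = window (Function.update Yf i (Xf i)) 0 n := by
  ext r c
  simp only [toSq, updateRow_apply, Fin.ext_iff, of_apply, window_apply, zero_add,
    Function.update_apply]
  split_ifs <;> rfl

variable [CommRing α]

theorem det_succ_of_row_zero {m : ℕ} (M : Matrix (Fin (m + 1)) (Fin (m + 1)) α)
    (h : ∀ j : Fin m, M 0 j.succ = 0) : M.det = M 0 0 * (M.submatrix Fin.succ Fin.succ).det := by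
  rw [det_succ_row_zero, Fin.sum_univ_succ, sum_eq_zero fun j _ => by simp [h j]]
  simp

theorem det_succ_of_col_last {m : ℕ} (M : Matrix (Fin (m + 1)) (Fin (m + 1)) α)
    (h : ∀ i : Fin m, M i.castSucc (Fin.last m) = 0) :
    M.det = M (Fin.last m) (Fin.last m) * (M.submatrix Fin.castSucc Fin.castSucc).det := by
  rw [det_succ_column M (Fin.last m), Fin.sum_univ_castSucc,
    sum_eq_zero fun i _ => by simp [h i]]
  simp [← two_mul, pow_mul]

theorem det_window_succ_succ (f : ℕ → ℕ → α) (o m : ℕ)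
    (hrow : ∀ j < m, f (o + m + 1) (o + j) = 0) (hcol : ∀ i < m, f (o + i) (o + m + 1) = 0) :
    (window f o (m + 2)).det = f (o + m + 1) (o + m + 1) * (window f o (m + 1)).det
      - f (o + m) (o + m + 1) * f (o + m + 1) (o + m) * (window f o m).det := by
  rw [det_succ_row _ (Fin.last (m + 1)), Fin.sum_univ_castSucc, Fin.sum_univ_castSucc,
    sum_eq_zero fun j _ => by simp [window, ← add_assoc, hrow j j.isLt]]
  have hminor : ((window f o (m + 2)).submatrix (Fin.last (m + 1)).succAbove
      (Fin.last m).castSucc.succAbove).det = f (o + m) (o + m + 1) * (window f o m).det := by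
    rw [det_succ_of_col_last]
    · have hlast : (Fin.last m).castSucc.succAbove (Fin.last m) = Fin.last (m + 1) :=
        Fin.succAbove_castSucc_self _
      have hinner : (window f o (m + 2)).submatrix (Fin.castSucc ∘ Fin.castSucc)
          ((Fin.last m).castSucc.succAbove ∘ Fin.castSucc) = window f o m := by
        ext r c
        simp [Fin.succAbove_of_castSucc_lt, Fin.lt_def]
      simp only [submatrix_submatrix, Fin.succAbove_last, hinner, submatrix_apply, hlast]
      simp [← add_assoc]
    · intro i
      simpa [Fin.succAbove_of_le_castSucc, ← add_assoc] using hcol i i.isLt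
  rw [hminor, Fin.succAbove_last, submatrix_castSucc_window]
  have hodd : (-1 : α) ^ (m + 1 + m) = -1 := by
    rw [show m + 1 + m = 2 * m + 1 by ring, pow_succ, pow_mul]; simp
  have heven : (-1 : α) ^ (m + 1 + (m + 1)) = 1 := by
    rw [← two_mul, pow_mul]; simp
  simp only [window_apply, Fin.val_last, Fin.val_castSucc, hodd, heven, zero_add]
  simp only [← add_assoc]
  ring

theorem det_window_rotate (G : ℕ → ℕ → α) (o p : ℕ) :
    (window G o (p + 1)).det
      = (-1) ^ p * (window (Function.update (fun r => G (r + 1)) (o + p) (G o)) o (p + 1)).det := by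
  have hrot : (window G o (p + 1)).submatrix (finRotate (p + 1)) id
      = window (Function.update (fun r => G (r + 1)) (o + p) (G o)) o (p + 1) := by
    ext r c
    simp only [submatrix_apply, id, window_apply, coe_finRotate, Fin.ext_iff, Fin.val_last,
      Function.update_apply]
    split_ifs <;> first | (exfalso; omega) | simp [add_assoc]
  rw [← hrot, det_permute, sign_finRotate, Nat.add_sub_cancel]
  push_cast
  rw [← mul_assoc, ← pow_add, ← two_mul, pow_mul]
  simp

end Window

section Tridiagonal

variable {α : Type*} [CommRing α]

def IsTridiagonal (f : ℕ → ℕ → α) : Prop :=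
  ∀ r c, r + 1 < c ∨ c + 1 < r → f r c = 0

namespace IsTridiagonal

variable {f : ℕ → ℕ → α}

theorem det_window_succ_succ (hf : IsTridiagonal f) (o m : ℕ) :
    (window f o (m + 2)).det = f (o + m + 1) (o + m + 1) * (window f o (m + 1)).det
      - f (o + m) (o + m + 1) * f (o + m + 1) (o + m) * (window f o m).det :=
  _root_.det_window_succ_succ f o m (fun j hj => hf _ _ (by omega))
    (fun i hi => hf _ _ (by omega))

theorem det_window_jacobi (hf : IsTridiagonal f) (o m : ℕ) :
    (window f o (m + 2)).det * (window f (o + 1) m).det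
      - (window f o (m + 1)).det * (window f (o + 1) (m + 1)).det
      = -∏ i ∈ range (m + 1), f (o + i) (o + i + 1) * f (o + i + 1) (o + i) := by
  induction m with
  | zero =>
    have h1 : ∀ p, (window f p 1).det = f p p := fun p => by simp [det_unique]
    rw [hf.det_window_succ_succ o 0, h1, h1]
    simp only [add_zero, det_fin_zero, mul_one, zero_add, range_one, prod_singleton]
    ring
  | succ m ih =>
    have h := hf.det_window_succ_succ (o + 1) m
    have h' := hf.det_window_succ_succ o (m + 1)
    simp only [show o + 1 + m = o + (m + 1) by ring] at h
    rw [h, h', prod_range_succ]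
    linear_combination f (o + (m + 1)) (o + (m + 1) + 1) * f (o + (m + 1) + 1) (o + (m + 1)) * ih

theorem det_window_update (hf : IsTridiagonal f) (v : ℕ → α) (o m : ℕ)
    (hv : ∀ j < m, v (o + j) = 0) :
    (window (Function.update f (o + m + 1) v) o (m + 2)).det
      = v (o + m + 1) * (window f o (m + 1)).det
        - f (o + m) (o + m + 1) * v (o + m) * (window f o m).det := by
  have hcut : ∀ k ≤ m + 1, window (Function.update f (o + m + 1) v) o k = window f o k :=
    fun k hk => window_congr fun r c _ hr _ _ => by
      rw [Function.update_of_ne (show r ≠ o + m + 1 by omega)]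
  rw [_root_.det_window_succ_succ _ o m (fun j hj => by simp [hv j hj])
    (fun i hi => by rw [Function.update_of_ne (by omega)]; exact hf _ _ (by omega)),
    hcut _ le_rfl, hcut _ (by omega)]
  simp

end IsTridiagonal

end Tridiagonal

section TwoRowPencil

open Polynomial

variable {α : Type*} [CommRing α] {ι : Type*} [Fintype ι] [DecidableEq ι]

theorem det_updateRow_add_smul_updateRow_add_smul (Y : Matrix ι ι α) (v w : ι → α) (t : α)
    {i j : ι} (hij : i ≠ j) :
    ((Y.updateRow i (Y i + t • v)).updateRow j (Y j + t • w)).det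
      = Y.det + t * ((Y.updateRow i v).det + (Y.updateRow j w).det)
        + t ^ 2 * ((Y.updateRow i v).updateRow j w).det := by
  have hrow_i : ∀ x, (Y.updateRow j x).updateRow i (Y i) = Y.updateRow j x := fun x => by
    rw [← updateRow_ne (M := Y) (b := x) hij, updateRow_eq_self]
  have hrow_j : ∀ x, (Y.updateRow i x).updateRow j (Y j) = Y.updateRow i x := fun x => by
    rw [← updateRow_ne (M := Y) (b := x) hij.symm, updateRow_eq_self]
  rw [det_updateRow_add, det_updateRow_smul, hrow_j, updateRow_comm _ hij, det_updateRow_add,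
    det_updateRow_smul, updateRow_eq_self, det_updateRow_add, det_updateRow_smul, hrow_i,
    updateRow_comm _ hij.symm]
  ring

theorem coeff_one_det_add_X_smul (Y A : Matrix ι ι α) {i j : ι} (hij : i ≠ j)
    (hA : ∀ k, k ≠ i → k ≠ j → A k = 0) :
    (Y.map C + (X : α[X]) • A.map C).det.coeff 1
      = (Y.updateRow i (A i)).det + (Y.updateRow j (A j)).det := by
  set Y' := Y.map C
  have hpencil : Y' + (X : α[X]) • A.map C
      = (Y'.updateRow i (Y' i + (X : α[X]) • (C ∘ A i))).updateRow j
          (Y' j + (X : α[X]) • (C ∘ A j)) := by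
    ext k l
    by_cases hj : k = j
    · subst hj; simp
    by_cases hi : k = i
    · subst hi; simp [hj]
    · simp [hi, hj, hA k hi hj]
  have hC : ∀ M : Matrix ι ι α, (M.map C).det = C M.det := fun M =>
    (RingHom.map_det C M).symm
  rw [hpencil, det_updateRow_add_smul_updateRow_add_smul _ _ _ _ hij]
  simp only [Y', ← map_updateRow, hC]
  simp [coeff_X_mul, coeff_C]

theorem aeval_detLM (n : ℕ) (Xf Yf : ℕ → ℕ → α) :
    MvPolynomial.aeval ![1, (X : α[X])] (detLM n Xf Yf)
      = ((toSq n Yf).map C + (X : α[X]) • (toSq n Xf).map C).det := by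
  rw [detLM, AlgHom.map_det]
  congr 1
  ext k l
  simp

theorem det_updateRow_add_det_updateRow_of_detLM_eq {n p : ℕ} {Xf Yf : ℕ → ℕ → α}
    {c₀ c₁ c₂ : α} {i j : Fin n} (hij : i ≠ j) (hX : ∀ k, k ≠ i → k ≠ j → toSq n Xf k = 0)
    (h : detLM n Xf Yf = MvPolynomial.X 0 ^ p * (MvPolynomial.C c₀ * MvPolynomial.X 0 ^ 2
      + MvPolynomial.C c₁ * MvPolynomial.X 1 * MvPolynomial.X 0
      + MvPolynomial.C c₂ * MvPolynomial.X 1 ^ 2)) :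
    ((toSq n Yf).updateRow i (toSq n Xf i)).det + ((toSq n Yf).updateRow j (toSq n Xf j)).det
      = c₁ := by
  have h1 := congrArg (fun P => (MvPolynomial.aeval ![1, (X : α[X])] P).coeff 1) h
  simp only [aeval_detLM, coeff_one_det_add_X_smul _ _ hij hX] at h1
  rw [h1]
  simp

end TwoRowPencil

section Band

variable {α : Type*} [CommRing α] (a : ℕ → ℕ → α)

def bandYTail (n : ℕ) : ℕ → ℕ → α := fun r c => bandY n 2 a (r + 1) c

theorem isTridiagonal_bandYTail (n : ℕ) : IsTridiagonal (bandYTail a n) := fun r c h => by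
  simp only [bandYTail, bandY]
  rw [if_neg (by omega)]

theorem sminor_stairCore_band {n i M : ℕ} (hi : 1 ≤ i) (hM : M < n) :
    sminor (stairCore n 2 (bandX n 2 a) (bandY n 2 a)) i M
      = (window (bandYTail a n) (i - 1) (M + 1 - i)).det := by
  refine congrArg det (ext fun r c => ?_)
  have hr : i - 1 + (r : ℕ) < n - 1 := by omega
  simp only [stairCore, of_apply, window_apply, bandYTail, Nat.div_eq_of_lt hr,
    Nat.mod_eq_of_lt hr]
  rw [if_pos (by omega), if_pos (by omega)]
  simp

theorem det_updateRow_zero_band (m : ℕ) :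
    ((toSq (m + 3) (bandY (m + 3) 2 a)).updateRow 0 (toSq (m + 3) (bandX (m + 3) 2 a) 0)).det
      = (-1) ^ m * (a 2 1 * (window (bandYTail a (m + 3)) 0 (m + 2)).det
        - a 1 1 * a 3 (m + 3) * (window (bandYTail a (m + 3)) 0 (m + 1)).det) := by
  calc _ = (-1) ^ (m + 2) * (window (Function.update (bandYTail a (m + 3)) (0 + (m + 1) + 1)
        (bandX (m + 3) 2 a 0)) 0 (m + 1 + 2)).det := by
        rw [updateRow_toSq_eq_window, det_window_rotate]
        -- `Function.update _ 0 _ (r + 1)` unfolds to its `else` branch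
        rfl
    _ = _ := by
        rw [(isTridiagonal_bandYTail a _).det_window_update _ 0 (m + 1) fun j hj => ?_]
        · have e1 : bandX (m + 3) 2 a 0 (m + 2) = a 2 1 := by
            simp only [bandX]; rw [if_pos (by omega)]; congr 1; omega
          have e2 : bandX (m + 3) 2 a 0 (m + 1) = a 1 1 := by
            simp only [bandX]; rw [if_pos (by omega)]; congr 1; omega
          have e3 : bandYTail a (m + 3) (m + 1) (m + 2) = a 3 (m + 3) := by
            simp only [bandYTail, bandY]; rw [if_pos (by omega)]; congr 1; omega
          simp only [zero_add, e1, e2, e3]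
          rw [pow_add]
          ring
        · simp only [bandX]
          rw [if_neg (by omega)]

theorem det_updateRow_one_band (m : ℕ) :
    ((toSq (m + 3) (bandY (m + 3) 2 a)).updateRow 1 (toSq (m + 3) (bandX (m + 3) 2 a) 1)).det
      = -(-1) ^ m * a 3 1 * a 1 2 * (window (bandYTail a (m + 3)) 1 (m + 1)).det := by
  calc _ = a 3 1 * (window (Function.update (bandY (m + 3) 2 a) 1 (bandX (m + 3) 2 a 1))
          1 (m + 2)).det := by
        rw [updateRow_toSq_eq_window, Fin.val_one, det_succ_of_row_zero, submatrix_succ_window]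
        · rfl
        · intro j
          simp only [window_apply, Fin.val_zero, Fin.val_succ]
          rw [Function.update_of_ne (by omega), bandY, if_neg (by omega)]
    _ = a 3 1 * ((-1) ^ (m + 1) * (window (Function.update (bandYTail a (m + 3)) (1 + m + 1)
          (bandX (m + 3) 2 a 1)) 1 (m + 2)).det) := by
        rw [det_window_rotate]
        congr 3
        refine window_congr fun r c hr _ _ _ => ?_
        simp only [Function.update_apply, show 1 + (m + 1) = 1 + m + 1 by ring,
          if_neg (show r + 1 ≠ 1 by omega), if_true]
        split_ifs <;> rfl
    _ = _ := by
        rw [(isTridiagonal_bandYTail a _).det_window_update _ 1 m fun j hj => ?_]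
        · have e1 : bandX (m + 3) 2 a 1 (1 + m + 1) = a 1 2 := by
            simp only [bandX]; rw [if_pos (by omega)]; congr 1; omega
          have e2 : bandX (m + 3) 2 a 1 (1 + m) = 0 := by
            simp only [bandX]; rw [if_neg (by omega)]
          rw [e1, e2, pow_succ]
          ring
        · simp only [bandX]
          rw [if_neg (by omega)]

theorem prod_bandYTail_offDiag (m : ℕ) :
    ∏ i ∈ range (m + 1), bandYTail a (m + 3) i (i + 1) * bandYTail a (m + 3) (i + 1) i
      = (∏ j ∈ Icc 2 (m + 2), a 3 j) * ∏ j ∈ Icc 3 (m + 3), a 1 j := by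
  have hIcc : ∀ (g : ℕ → α) (s : ℕ), ∏ j ∈ Icc s (m + s), g j = ∏ i ∈ range (m + 1), g (i + s) :=
    fun g s => by
      rw [← Ico_add_one_right_eq_Icc, prod_Ico_eq_prod_range, show m + s + 1 - s = m + 1 by omega]
      simp only [add_comm s]
  rw [hIcc, hIcc, ← prod_mul_distrib]
  refine prod_congr rfl fun i hi => ?_
  have hi := mem_range.mp hi
  simp only [bandYTail, bandY]
  rw [if_pos (by omega), if_pos (by omega)]
  congr 2 <;> omega

theorem mixedCoeff_eq_of_detLM_band_eq (m : ℕ) {c₀ c₁ c₂ : α}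
    (hc : detLM (m + 3) (bandX (m + 3) 2 a) (bandY (m + 3) 2 a)
      = MvPolynomial.X 0 ^ (m + 1) * (MvPolynomial.C c₀ * MvPolynomial.X 0 ^ 2
        + MvPolynomial.C c₁ * MvPolynomial.X 1 * MvPolynomial.X 0
        + MvPolynomial.C c₂ * MvPolynomial.X 1 ^ 2)) :
    c₁ = (-1) ^ m * (a 2 1 * (window (bandYTail a (m + 3)) 0 (m + 2)).det
      - a 1 1 * a 3 (m + 3) * (window (bandYTail a (m + 3)) 0 (m + 1)).det
      - a 3 1 * a 1 2 * (window (bandYTail a (m + 3)) 1 (m + 1)).det) := by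
  have hX : ∀ k : Fin (m + 3), k ≠ 0 → k ≠ 1 → toSq (m + 3) (bandX (m + 3) 2 a) k = 0 :=
    fun k h0 h1 => by
      have : 2 ≤ (k : ℕ) := by
        by_contra! h
        interval_cases hk : (k : ℕ)
        · exact h0 (Fin.ext hk)
        · exact h1 (Fin.ext hk)
      ext j
      simp only [toSq, of_apply, bandX, Pi.zero_apply]
      rw [if_neg (by omega)]
  rw [← det_updateRow_add_det_updateRow_of_detLM_eq (by simp) hX hc, det_updateRow_zero_band,
    det_updateRow_one_band]
  ring

end Band

/-- the generalized exchange relation for `φ̃_1` in the generic band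
situation with `k = 2`. -/
theorem statement14 (n : ℕ) (hn : 2 < n) (c : ℕ → Rband)
    (hc : detLM n (bandX n 2 genA) (bandY n 2 genA)
        = (MvPolynomial.X 0 : MvPolynomial (Fin 2) Rband) ^ (n - 2)
          * (MvPolynomial.C (c 0) * (MvPolynomial.X 0 : MvPolynomial (Fin 2) Rband) ^ 2
              + MvPolynomial.C (c 1) * (MvPolynomial.X 1 : MvPolynomial (Fin 2) Rband)
                  * (MvPolynomial.X 0 : MvPolynomial (Fin 2) Rband)
              + MvPolynomial.C (c 2)
                  * (MvPolynomial.X 1 : MvPolynomial (Fin 2) Rband) ^ 2)) :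
    ∃ φstar : Rband,
      sminor (stairCore n 2 (bandX n 2 genA) (bandY n 2 genA)) 1 (n - 1) * φstar
        = genA 3 1 * genA 1 2
            * (sminor (stairCore n 2 (bandX n 2 genA) (bandY n 2 genA)) 2 (n - 1)) ^ 2
          + (-1 : Rband) ^ (n - 1) * c 1
              * sminor (stairCore n 2 (bandX n 2 genA) (bandY n 2 genA)) 2 (n - 1)
          + genA 1 1 * (∏ j ∈ Finset.Icc 3 n, genA 1 j)
              * (∏ j ∈ Finset.Icc 2 n, genA 3 j) := by
  obtain ⟨m, rfl⟩ : ∃ m, n = m + 3 := ⟨n - 3, by omega⟩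
  set D := fun o k => (window (bandYTail genA (m + 3)) o k).det
  have hc₁ := mixedCoeff_eq_of_detLM_band_eq genA m hc
  have hφ₁ : sminor _ 1 (m + 3 - 1) = D 0 (m + 2) := sminor_stairCore_band genA le_rfl (by omega)
  have hφ₂ : sminor _ 2 (m + 3 - 1) = D 1 (m + 1) :=
    sminor_stairCore_band genA (by omega) (by omega)
  have hjacobi := (isTridiagonal_bandYTail genA (m + 3)).det_window_jacobi 0 m
  simp only [zero_add, prod_bandYTail_offDiag] at hjacobi
  have hsign : (-1 : Rband) ^ (m + 3 - 1) * (-1) ^ m = 1 := by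
    rw [← pow_add, show m + 3 - 1 + m = 2 * (m + 1) by omega, pow_mul]; simp
  rw [hφ₁, hφ₂, prod_Icc_succ_top (by omega : 2 ≤ m + 2 + 1)]
  refine ⟨genA 2 1 * D 1 (m + 1) - genA 1 1 * genA 3 (m + 3) * D 1 m, ?_⟩
  rw [hc₁]
  linear_combination (-(genA 1 1 * genA 3 (m + 3))) * hjacobi
    - (genA 2 1 * D 0 (m + 2) - genA 1 1 * genA 3 (m + 3) * D 0 (m + 1)
      - genA 3 1 * genA 1 2 * D 1 (m + 1)) * D 1 (m + 1) * hsign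

end
end

section
/- Fix integers 2 ≤ k < n. For every complex k×k matrix M all of whose trailing principal minors det M_{[i,k]}^{[i,k]}, 1 ≤ i ≤ k, are nonzero, there exist complex numbers a_{ij} (1 ≤ i ≤ k+1, 1 ≤ j ≤ n) with a_{k+1,j} ≠ 0 for all j (so that the band matrix Y is invertible) such that the top-left k×k block of XY^{−1} equals M. -/
open Matrix Finset

noncomputable section

namespace S15

def tembed (k t : ℕ) : Fin (k - t) → Fin k := fun r => ⟨t + r.1, by omega⟩

def tmin (k : ℕ) (W : Matrix (Fin k) (Fin k) ℂ) (t : ℕ) : ℂ :=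
  (W.submatrix (tembed k t) (tembed k t)).det

def Ptr (k : ℕ) (W : Matrix (Fin k) (Fin k) ℂ) : Prop := ∀ t, 1 ≤ t → tmin k W t ≠ 0

def nextW (k : ℕ) (W : Matrix (Fin k) (Fin k) ℂ) (u : Fin k → ℂ) : Matrix (Fin k) (Fin k) ℂ :=
  Matrix.of fun i m => if h : m.1 + 1 < k then W i ⟨m.1 + 1, h⟩ else ∑ j, u j * W i j

lemma lemA {k : ℕ} (hk : 2 ≤ k) (W : Matrix (Fin k) (Fin k) ℂ) (hW : Ptr k W) :
    ∃ u : Fin k → ℂ, (∀ j : Fin k, j.1 = 0 → u j = 1) ∧ Ptr k (nextW k W u) := by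
  classical
  -- the minor matrices with last column replaced by column jj of W
  let E : (t : ℕ) → Fin k → Matrix (Fin (k - t)) (Fin (k - t)) ℂ := fun t jj =>
    Matrix.of fun r c =>
      if h : t + c.1 + 1 < k then W (tembed k t r) ⟨t + c.1 + 1, h⟩ else W (tembed k t r) jj
  -- multilinearity in the last column
  have hdet : ∀ t, 1 ≤ t → t < k → ∀ u : Fin k → ℂ,
      tmin k (nextW k W u) t = ∑ jj : Fin k, u jj * (E t jj).det := by
    intro t ht1 ht2 u
    have hc0 : k - t - 1 < k - t := by omega
    have h0k : (0 : ℕ) < k := by omega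
    set c0 : Fin (k - t) := ⟨k - t - 1, hc0⟩ with hc0def
    have hB : ∀ jj : Fin k,
        E t jj = (E t ⟨0, h0k⟩).updateCol c0 (fun r => W (tembed k t r) jj) := by
      intro jj
      ext r c
      by_cases h : c = c0
      · subst h
        rw [Matrix.updateCol_self]
        show (if h : t + c0.1 + 1 < k then W (tembed k t r) ⟨t + c0.1 + 1, h⟩
              else W (tembed k t r) jj) = _
        rw [dif_neg (by simp only [hc0def]; omega)]
      · rw [Matrix.updateCol_ne h]
        have hcc : c.1 ≠ k - t - 1 := fun hh => h (Fin.ext hh)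
        have hlt : t + c.1 + 1 < k := by have := c.2; omega
        show (if h : t + c.1 + 1 < k then W (tembed k t r) ⟨t + c.1 + 1, h⟩
              else W (tembed k t r) jj) = _
        rw [dif_pos hlt]
        show _ = (if h : t + c.1 + 1 < k then W (tembed k t r) ⟨t + c.1 + 1, h⟩
              else W (tembed k t r) ⟨0, h0k⟩)
        rw [dif_pos hlt]
    have hA : (nextW k W u).submatrix (tembed k t) (tembed k t)
        = (E t ⟨0, h0k⟩).updateCol c0 (fun r => ∑ j, u j * W (tembed k t r) j) := by
      ext r c
      by_cases h : c = c0
      · subst h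
        rw [Matrix.updateCol_self]
        show (if h : (tembed k t c0).1 + 1 < k then W (tembed k t r) ⟨(tembed k t c0).1 + 1, h⟩
              else ∑ j, u j * W (tembed k t r) j) = _
        rw [dif_neg (by simp only [tembed, hc0def]; omega)]
      · rw [Matrix.updateCol_ne h]
        have hcc : c.1 ≠ k - t - 1 := fun hh => h (Fin.ext hh)
        have hlt : t + c.1 + 1 < k := by have := c.2; omega
        show (if h : (tembed k t c).1 + 1 < k then W (tembed k t r) ⟨(tembed k t c).1 + 1, h⟩
              else ∑ j, u j * W (tembed k t r) j) = _
        rw [dif_pos (show (tembed k t c).1 + 1 < k from hlt)]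
        show W (tembed k t r) ⟨t + c.1 + 1, hlt⟩
            = (if h : t + c.1 + 1 < k then W (tembed k t r) ⟨t + c.1 + 1, h⟩
              else W (tembed k t r) ⟨0, h0k⟩)
        rw [dif_pos hlt]
    rw [tmin, hA]
    set B := E t ⟨0, h0k⟩ with hBdef
    let L : (Fin (k - t) → ℂ) →ₗ[ℂ] ℂ :=
      { toFun := fun v => (B.updateCol c0 v).det
        map_add' := fun a b => Matrix.det_updateCol_add B c0 a b
        map_smul' := fun s a => Matrix.det_updateCol_smul B c0 s a }
    have hv : (fun r => ∑ j, u j * W (tembed k t r) j)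
        = ∑ j : Fin k, u j • (fun r => W (tembed k t r) j) := by
      funext r
      simp [Finset.sum_apply]
    rw [hv]
    have hmap := map_sum L (fun j : Fin k => u j • fun r => W (tembed k t r) j) Finset.univ
    show L (∑ j : Fin k, u j • fun r => W (tembed k t r) j) = _
    rw [hmap]
    refine Finset.sum_congr rfl fun jj _ => ?_
    rw [LinearMap.map_smul, smul_eq_mul]
    congr 1
    show (B.updateCol c0 fun r => W (tembed k t r) jj).det = _
    rw [hB jj]
  -- the key nonvanishing coefficient
  have hE : ∀ (t : ℕ) (ht1 : 1 ≤ t) (ht2 : t < k), (E t ⟨t, ht2⟩).det ≠ 0 := by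
    intro t ht1 ht2
    have hkt : 0 < k - t := by omega
    let σf : Fin (k - t) → Fin (k - t) := fun c =>
      if h : c.1 + 1 < k - t then ⟨c.1 + 1, h⟩ else ⟨0, hkt⟩
    let σg : Fin (k - t) → Fin (k - t) := fun c =>
      if c.1 = 0 then ⟨k - t - 1, by omega⟩ else ⟨c.1 - 1, by omega⟩
    have hσf : ∀ (c) (h : c.1 + 1 < k - t), σf c = ⟨c.1 + 1, h⟩ := fun c h => dif_pos h
    have hσf' : ∀ (c), ¬(c.1 + 1 < k - t) → σf c = ⟨0, hkt⟩ := fun c h => dif_neg h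
    have hfg : Function.LeftInverse σg σf := by
      intro c
      by_cases h : c.1 + 1 < k - t
      · rw [hσf c h]
        show (if c.1 + 1 = 0 then _ else _) = c
        rw [if_neg (by omega)]
        refine Fin.ext ?_
        show c.1 + 1 - 1 = c.1
        omega
      · rw [hσf' c h]
        show (if (0:ℕ) = 0 then (⟨k - t - 1, _⟩ : Fin (k-t)) else _) = c
        rw [if_pos rfl]
        refine Fin.ext ?_
        show k - t - 1 = c.1
        have := c.2
        omega
    have hgf : Function.RightInverse σg σf := by
      intro c
      by_cases h : c.1 = 0
      · show σf (if c.1 = 0 then _ else _) = c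
        rw [if_pos h, hσf' _ (by show ¬(k - t - 1 + 1 < k - t); omega)]
        refine Fin.ext ?_
        show 0 = c.1
        omega
      · show σf (if c.1 = 0 then _ else _) = c
        rw [if_neg h, hσf _ (by show c.1 - 1 + 1 < k - t; have := c.2; omega)]
        refine Fin.ext ?_
        show c.1 - 1 + 1 = c.1
        omega
    let σ : Equiv.Perm (Fin (k - t)) := ⟨σf, σg, hfg, hgf⟩
    have hσ : ∀ c, σ c = σf c := fun _ => rfl
    have hEet : E t ⟨t, ht2⟩ = (W.submatrix (tembed k t) (tembed k t)).submatrix id σ := by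
      ext r c
      show (if h : t + c.1 + 1 < k then W (tembed k t r) ⟨t + c.1 + 1, h⟩
            else W (tembed k t r) ⟨t, ht2⟩) = W (tembed k t r) (tembed k t (σ c))
      by_cases h : c.1 + 1 < k - t
      · rw [dif_pos (show t + c.1 + 1 < k by omega)]
        rw [hσ, hσf c h]
        congr 1 <;> exact Fin.ext (by show t + c.1 + 1 = t + (c.1 + 1); omega)
      · rw [dif_neg (by omega)]
        rw [hσ, hσf' c h]
        congr 1 <;> exact Fin.ext (by show t = t + 0; omega)
    rw [hEet, Matrix.det_permute']
    have h1 : ((Equiv.Perm.sign σ : ℤ) : ℂ) ≠ 0 := by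
      rcases Int.units_eq_one_or (Equiv.Perm.sign σ) with h | h <;> rw [h] <;> norm_num
    exact mul_ne_zero h1 (hW t ht1)
  -- polynomials
  let p : ℕ → Polynomial ℂ := fun t => ∑ jj : Fin k, Polynomial.C ((E t jj).det) * Polynomial.X ^ jj.1
  have hcoeff : ∀ (t : ℕ) (ht2 : t < k), (p t).coeff t = (E t ⟨t, ht2⟩).det := by
    intro t ht2
    show (∑ jj : Fin k, Polynomial.C ((E t jj).det) * Polynomial.X ^ jj.1).coeff t = _
    rw [Polynomial.finset_sum_coeff]
    rw [Finset.sum_eq_single (⟨t, ht2⟩ : Fin k)]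
    · simp [Polynomial.coeff_C_mul, Polynomial.coeff_X_pow]
    · intro b _ hb
      have hbt : (b : ℕ) ≠ t := fun hh => hb (Fin.ext hh)
      simp only [Polynomial.coeff_C_mul, Polynomial.coeff_X_pow]
      rw [if_neg (fun hh : (t : ℕ) = b => hbt hh.symm), mul_zero]
    · intro hb
      exact absurd (Finset.mem_univ _) hb
  have hp : ∀ t, 1 ≤ t → t < k → p t ≠ 0 := by
    intro t ht1 ht2 h0
    exact hE t ht1 ht2 (by rw [← hcoeff t ht2, h0, Polynomial.coeff_zero])
  obtain ⟨τ, hτ⟩ : ∃ τ : ℂ, ∀ t ∈ Finset.Icc 1 (k - 1), ¬(p t).IsRoot τ := by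
    have hfin : (⋃ t ∈ Finset.Icc 1 (k - 1), {x : ℂ | (p t).IsRoot x}).Finite := by
      apply Set.Finite.biUnion (Finset.Icc 1 (k - 1)).finite_toSet
      intro t ht
      have := Finset.mem_Icc.mp ht
      exact Polynomial.finite_setOf_isRoot (hp t this.1 (by omega))
    obtain ⟨τ, hτ⟩ := hfin.infinite_compl.nonempty
    exact ⟨τ, fun t ht hroot => hτ (Set.mem_biUnion ht hroot)⟩
  refine ⟨fun jj => τ ^ jj.1, fun j hj => by simp [hj], ?_⟩
  intro t ht1
  by_cases ht2 : t < k
  · have heq : tmin k (nextW k W fun jj => τ ^ jj.1) t = (p t).eval τ := by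
      rw [hdet t ht1 ht2]
      show _ = (∑ jj : Fin k, Polynomial.C ((E t jj).det) * Polynomial.X ^ jj.1).eval τ
      rw [Polynomial.eval_finset_sum]
      refine Finset.sum_congr rfl fun jj _ => ?_
      rw [Polynomial.eval_mul, Polynomial.eval_C, Polynomial.eval_pow, Polynomial.eval_X]
      ring
    rw [heq]
    exact fun hr => hτ t (Finset.mem_Icc.mpr ⟨ht1, by omega⟩) hr
  · have h0 : k - t = 0 := by omega
    haveI : IsEmpty (Fin (k - t)) := by rw [h0]; infer_instance
    rw [tmin, Matrix.det_isEmpty]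
    exact one_ne_zero

lemma lemB {k : ℕ} (W : Matrix (Fin k) (Fin k) ℂ) (hW : Ptr k W) (t : ℕ) :
    ∃ z : ℕ → ℂ, z 0 = 1 ∧ ∀ i : Fin k, t < i.1 →
      (∑ m ∈ Finset.range (k - t),
        if hm : t + m < k then z m * W i ⟨t + m, hm⟩ else 0) = 0 := by
  classical
  by_cases htk : t < k
  · set A : Matrix (Fin (k - (t+1))) (Fin (k - (t+1))) ℂ :=
      W.submatrix (tembed k (t+1)) (tembed k (t+1)) with hAdef
    have hA : IsUnit A.det := by
      have := hW (t+1) (by omega)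
      rw [tmin] at this
      exact isUnit_iff_ne_zero.mpr this
    set b : Fin (k - (t+1)) → ℂ := fun r => W (tembed k (t+1) r) ⟨t, htk⟩ with hbdef
    set x : Fin (k - (t+1)) → ℂ := A⁻¹ *ᵥ (-b) with hxdef
    have hAx : A *ᵥ x = -b := by
      rw [hxdef, Matrix.mulVec_mulVec, Matrix.mul_nonsing_inv _ hA, Matrix.one_mulVec]
    refine ⟨fun m => if m = 0 then 1 else if hm : m - 1 < k - (t+1) then x ⟨m - 1, hm⟩ else 0,
      rfl, ?_⟩
    intro i hi
    have hkt : k - t = (k - (t+1)) + 1 := by omega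
    rw [hkt, Finset.sum_range_succ']
    set r : Fin (k - (t+1)) := ⟨i.1 - (t+1), by have := i.2; omega⟩ with hrdef
    have hir : tembed k (t+1) r = i := by
      refine Fin.ext ?_
      show t + 1 + (i.1 - (t+1)) = i.1
      omega
    have hsum : (∑ m ∈ Finset.range (k - (t+1)),
        if hm : t + (m + 1) < k then
          (if m + 1 = 0 then (1:ℂ) else if hm2 : m + 1 - 1 < k - (t+1) then x ⟨m + 1 - 1, hm2⟩ else 0)
            * W i ⟨t + (m + 1), hm⟩
        else 0) = (A *ᵥ x) r := by
      have : (A *ᵥ x) r = ∑ c : Fin (k - (t+1)), A r c * x c := rfl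
      rw [this, ← Fin.sum_univ_eq_sum_range (fun m =>
        if hm : t + (m + 1) < k then
          (if m + 1 = 0 then (1:ℂ) else if hm2 : m + 1 - 1 < k - (t+1) then x ⟨m + 1 - 1, hm2⟩ else 0)
            * W i ⟨t + (m + 1), hm⟩
        else 0) (k - (t+1))]
      refine Finset.sum_congr rfl fun c _ => ?_
      have hc : t + (c.1 + 1) < k := by have := c.2; omega
      rw [dif_pos hc, if_neg (by omega)]
      have hc2 : c.1 + 1 - 1 < k - (t+1) := by have := c.2; omega
      rw [dif_pos hc2]
      have hx1 : (⟨c.1 + 1 - 1, hc2⟩ : Fin (k - (t+1))) = c :=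
        Fin.ext (by show c.1 + 1 - 1 = c.1; omega)
      rw [hx1]
      have hW1 : (⟨t + (c.1 + 1), hc⟩ : Fin k) = tembed k (t+1) c := Fin.ext (by
        show t + (c.1 + 1) = t + 1 + c.1
        omega)
      rw [hW1]
      have : A r c = W (tembed k (t+1) r) (tembed k (t+1) c) := rfl
      rw [this, hir, mul_comm]
    rw [hsum, hAx]
    have hf0 : (if hm : t + 0 < k then
        (if (0:ℕ) = 0 then (1:ℂ) else if hm2 : 0 - 1 < k - (t+1) then x ⟨0 - 1, hm2⟩ else 0)
          * W i ⟨t + 0, hm⟩ else 0) = W i ⟨t, htk⟩ := by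
      rw [dif_pos (by omega : t + 0 < k), if_pos rfl, one_mul]
      congr 1
    rw [hf0]
    have hbr : (-b) r = - W i ⟨t, htk⟩ := by
      rw [hbdef]
      show -(W (tembed k (t+1) r) ⟨t, htk⟩) = _
      rw [hir]
    rw [hbr]
    ring
  · refine ⟨fun m => if m = 0 then 1 else 0, rfl, ?_⟩
    intro i hi
    have : k - t = 0 := by omega
    rw [this]
    simp

open Classical in
def stepv {k : ℕ} (W : Matrix (Fin k) (Fin k) ℂ) : Fin k → ℂ :=
  if h : 2 ≤ k ∧ Ptr k W then (lemA h.1 W h.2).choose else fun j => if j.1 = 0 then 1 else 0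

lemma stepv_zero {k : ℕ} (W : Matrix (Fin k) (Fin k) ℂ) (j : Fin k) (hj : j.1 = 0) :
    stepv W j = 1 := by
  rw [stepv]
  by_cases h : 2 ≤ k ∧ Ptr k W
  · rw [dif_pos h]
    exact (lemA h.1 W h.2).choose_spec.1 j hj
  · rw [dif_neg h, if_pos hj]

lemma stepv_ptr {k : ℕ} (hk : 2 ≤ k) (W : Matrix (Fin k) (Fin k) ℂ) (hW : Ptr k W) :
    Ptr k (nextW k W (stepv W)) := by
  rw [stepv, dif_pos ⟨hk, hW⟩]
  exact (lemA hk W hW).choose_spec.2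

def Wseq {k : ℕ} (M : Matrix (Fin k) (Fin k) ℂ) : ℕ → Matrix (Fin k) (Fin k) ℂ
  | 0 => M
  | c + 1 => nextW k (Wseq M c) (stepv (Wseq M c))

lemma Wseq_ptr {k : ℕ} (hk : 2 ≤ k) (M : Matrix (Fin k) (Fin k) ℂ) (hM : Ptr k M) :
    ∀ c, Ptr k (Wseq M c)
  | 0 => hM
  | c + 1 => stepv_ptr hk _ (Wseq_ptr hk M hM c)

def Rcol {k : ℕ} (M : Matrix (Fin k) (Fin k) ℂ) (c : ℕ) : Fin k → ℂ := fun i =>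
  if h : c < k then Wseq M 0 i ⟨c, h⟩ else Wseq M (c - k + 1) i ⟨k - 1, by have := i.2; omega⟩

lemma consist {k : ℕ} (M : Matrix (Fin k) (Fin k) ℂ) :
    ∀ (w : ℕ) (i m : Fin k), Wseq M w i m = Rcol M (w + m.1) i := by
  intro w
  induction w with
  | zero =>
    intro i m
    show Wseq M 0 i m = if h : 0 + m.1 < k then Wseq M 0 i ⟨0 + m.1, h⟩ else _
    rw [dif_pos (by have := m.2; omega : 0 + m.1 < k)]
    congr 1
    exact Fin.ext (by show m.1 = 0 + m.1; omega)
  | succ w ih =>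
    intro i m
    by_cases h : m.1 + 1 < k
    · have h1 : Wseq M (w+1) i m = Wseq M w i ⟨m.1 + 1, h⟩ := by
        show nextW k (Wseq M w) (stepv (Wseq M w)) i m = _
        show (if hh : m.1 + 1 < k then Wseq M w i ⟨m.1 + 1, hh⟩
            else ∑ j, stepv (Wseq M w) j * Wseq M w i j) = _
        rw [dif_pos h]
      rw [h1, ih i ⟨m.1 + 1, h⟩]
      have : w + (m.1 + 1) = (w + 1) + m.1 := by omega
      rw [this]
    · have hk0 : 0 < k := i.pos
      have hm : m = ⟨k - 1, by omega⟩ := Fin.ext (by show m.1 = k - 1; have := m.2; omega)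
      rw [hm]
      show Wseq M (w+1) i ⟨k-1, _⟩ =
        if hh : (w + 1) + (k - 1) < k then Wseq M 0 i ⟨(w+1) + (k-1), hh⟩
        else Wseq M ((w+1) + (k-1) - k + 1) i ⟨k - 1, _⟩
      rw [dif_neg (by omega)]
      have : (w + 1) + (k - 1) - k + 1 = w + 1 := by omega
      rw [this]

open Classical in
def endz {k : ℕ} (W : Matrix (Fin k) (Fin k) ℂ) (t : ℕ) : ℕ → ℂ :=
  if h : Ptr k W then (lemB W h t).choose else fun m => if m = 0 then 1 else 0

lemma endz_zero {k : ℕ} (W : Matrix (Fin k) (Fin k) ℂ) (t : ℕ) : endz W t 0 = 1 := by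
  simp only [endz]
  by_cases h : Ptr k W
  · rw [dif_pos h]
    exact (lemB W h t).choose_spec.1
  · rw [dif_neg h]
    rfl

lemma endz_spec {k : ℕ} (W : Matrix (Fin k) (Fin k) ℂ) (hW : Ptr k W) (t : ℕ)
    (i : Fin k) (hi : t < i.1) :
    (∑ m ∈ Finset.range (k - t),
      if hm : t + m < k then endz W t m * W i ⟨t + m, hm⟩ else 0) = 0 := by
  simp only [endz, dif_pos hW]
  exact (lemB W hW t).choose_spec.2 i hi

def ycoef (n k : ℕ) (M : Matrix (Fin k) (Fin k) ℂ) (c m : ℕ) : ℂ :=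
  if c + k < n then
    (if hm : m < k then stepv (Wseq M c) ⟨m, hm⟩ else if m = k then -1 else 0)
  else endz (Wseq M (n - k)) (c - (n - k)) m

lemma ycoef_zero (n k : ℕ) (M : Matrix (Fin k) (Fin k) ℂ) (c : ℕ) (hk : 0 < k) :
    ycoef n k M c 0 = 1 := by
  simp only [ycoef]
  by_cases h : c + k < n
  · rw [if_pos h, dif_pos hk]
    exact stepv_zero _ _ rfl
  · rw [if_neg h]
    exact endz_zero _ _

def xval (n k : ℕ) (M : Matrix (Fin k) (Fin k) ℂ) (i : Fin k) (j : ℕ) : ℂ :=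
  ∑ m ∈ Finset.range (k+1), if j + m < n then Rcol M (j+m) i * ycoef n k M j m else 0

def aF (n k : ℕ) (M : Matrix (Fin k) (Fin k) ℂ) (s c : ℕ) : ℂ :=
  if h : 1 ≤ s ∧ 1 ≤ c ∧ s + c ≤ k + 1 then xval n k M ⟨c - 1, by omega⟩ (n + c + s - (k+2))
  else ycoef n k M (c + s - (k+2)) (k + 1 - s)

def PPm (n k : ℕ) (M : Matrix (Fin k) (Fin k) ℂ) : Matrix (Fin n) (Fin n) ℂ :=
  Matrix.of fun i j => if h : i.1 < k then Rcol M j.1 ⟨i.1, h⟩ else 0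

lemma Ym_apply (n k : ℕ) (M : Matrix (Fin k) (Fin k) ℂ) (i j : Fin n) :
    toSq n (bandY n k (aF n k M)) i j
      = if j.1 ≤ i.1 ∧ i.1 ≤ j.1 + k then ycoef n k M j.1 (i.1 - j.1) else 0 := by
  show bandY n k (aF n k M) i.1 j.1 = _
  simp only [bandY]
  by_cases h : j.1 ≤ i.1 ∧ i.1 ≤ j.1 + k
  · rw [if_pos ⟨h.1, h.2, i.2⟩, if_pos h]
    simp only [aF]
    rw [dif_neg (by omega)]
    have e1 : i.1 + 1 + (k + 1 + j.1 - i.1) - (k+2) = j.1 := by omega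
    have e2 : k + 1 - (k + 1 + j.1 - i.1) = i.1 - j.1 := by omega
    rw [e1, e2]
  · rw [if_neg (fun hc => h ⟨hc.1, hc.2.1⟩), if_neg h]

lemma Xm_apply (n k : ℕ) (hn : k < n) (M : Matrix (Fin k) (Fin k) ℂ) (i j : Fin n) :
    toSq n (bandX n k (aF n k M)) i j
      = if h : i.1 < k ∧ n - k + i.1 ≤ j.1 then xval n k M ⟨i.1, h.1⟩ j.1 else 0 := by
  show bandX n k (aF n k M) i.1 j.1 = _
  simp only [bandX]
  by_cases h : i.1 < k ∧ n - k + i.1 ≤ j.1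
  · rw [if_pos ⟨h.1, h.2, j.2⟩, dif_pos h]
    simp only [aF]
    rw [dif_pos (show 1 ≤ j.1 + k + 1 - n - i.1 ∧ 1 ≤ i.1 + 1 ∧
      (j.1 + k + 1 - n - i.1) + (i.1 + 1) ≤ k + 1 by have := j.2; omega)]
    congr 1
    have := j.2
    omega
  · rw [dif_neg h, if_neg (fun hc => h ⟨hc.1, hc.2.1⟩)]

lemma kill (n k : ℕ) (hk : 2 ≤ k) (hn : k < n) (M : Matrix (Fin k) (Fin k) ℂ)
    (hM : Ptr k M) (i : Fin k) (j : ℕ) (hjn : j < n) (hj : j < n - k + i.1) :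
    xval n k M i j = 0 := by
  by_cases hmid : j + k < n
  · simp only [xval]
    have hall : ∀ m ∈ Finset.range (k+1),
        (if j + m < n then Rcol M (j+m) i * ycoef n k M j m else 0)
          = Rcol M (j+m) i * ycoef n k M j m := by
      intro m hm
      rw [if_pos (by have := Finset.mem_range.mp hm; omega)]
    rw [Finset.sum_congr rfl hall, Finset.sum_range_succ]
    have hyk : ycoef n k M j k = -1 := by
      simp only [ycoef]
      rw [if_pos hmid, dif_neg (lt_irrefl k)]
      simp
    have hym : ∀ (m : ℕ) (hm : m < k), ycoef n k M j m = stepv (Wseq M j) ⟨m, hm⟩ := by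
      intro m hm
      simp only [ycoef]
      rw [if_pos hmid, dif_pos hm]
    have hR : Rcol M (j + k) i = ∑ jj : Fin k, stepv (Wseq M j) jj * Rcol M (j + jj.1) i := by
      have e0 : Rcol M (j + k) i = Wseq M (j + 1) i ⟨k - 1, by omega⟩ := by
        simp only [Rcol]
        rw [dif_neg (by omega)]
        have h1 : j + k - k + 1 = j + 1 := by omega
        rw [h1]
      rw [e0]
      show (if hh : (k - 1) + 1 < k then Wseq M j i ⟨(k - 1) + 1, hh⟩
          else ∑ jj, stepv (Wseq M j) jj * Wseq M j i jj) = _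
      rw [dif_neg (by omega)]
      refine Finset.sum_congr rfl fun jj _ => ?_
      rw [consist]
    have hsum : ∑ m ∈ Finset.range k, Rcol M (j+m) i * ycoef n k M j m
        = ∑ jj : Fin k, stepv (Wseq M j) jj * Rcol M (j + jj.1) i := by
      rw [← Fin.sum_univ_eq_sum_range (fun m => Rcol M (j+m) i * ycoef n k M j m) k]
      refine Finset.sum_congr rfl fun jj _ => ?_
      rw [hym jj.1 jj.2]
      have hjj : (⟨jj.1, jj.2⟩ : Fin k) = jj := Fin.ext rfl
      rw [hjj, mul_comm]
    rw [hsum, hyk, ← hR]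
    ring
  · have hjnk : n - k ≤ j := by omega
    have htk : j - (n - k) < k := by omega
    have hti : j - (n - k) < i.1 := by omega
    simp only [xval]
    have hsub : Finset.range (k - (j - (n-k))) ⊆ Finset.range (k+1) :=
      Finset.range_subset_range.mpr (by omega)
    rw [← Finset.sum_subset hsub (fun m hm1 hm2 => by
      have h2 : ¬(m < k - (j - (n-k))) := fun hc => hm2 (Finset.mem_range.mpr hc)
      exact if_neg (by omega))]
    have hspec := endz_spec (Wseq M (n-k)) (Wseq_ptr hk M hM (n-k)) (j - (n-k)) i hti
    refine Eq.trans (Finset.sum_congr rfl fun m hm => ?_) hspec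
    have hmlt := Finset.mem_range.mp hm
    have h1 : (j - (n-k)) + m < k := by omega
    rw [dif_pos h1, if_pos (show j + m < n by omega)]
    have hy : ycoef n k M j m = endz (Wseq M (n-k)) (j - (n-k)) m := by
      simp only [ycoef]
      rw [if_neg (by omega)]
    have hrc : Rcol M (j + m) i = Wseq M (n-k) i ⟨(j - (n-k)) + m, h1⟩ := by
      rw [consist M (n-k) i ⟨(j - (n-k)) + m, h1⟩]
      congr 1
      show j + m = n - k + ((j - (n-k)) + m)
      omega
    rw [hy, hrc, mul_comm]

lemma sumPP (n k : ℕ) (hk : 2 ≤ k) (hn : k < n) (M : Matrix (Fin k) (Fin k) ℂ)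
    (i : Fin n) (hik : i.1 < k) (j : Fin n) :
    (PPm n k M * toSq n (bandY n k (aF n k M))) i j = xval n k M ⟨i.1, hik⟩ j.1 := by
  rw [Matrix.mul_apply]
  set g : ℕ → ℂ := fun r =>
    if j.1 ≤ r ∧ r ≤ j.1 + k ∧ r < n then Rcol M r ⟨i.1, hik⟩ * ycoef n k M j.1 (r - j.1) else 0
    with hg
  have h1 : ∀ r : Fin n, PPm n k M i r * toSq n (bandY n k (aF n k M)) r j = g r.1 := by
    intro r
    rw [Ym_apply]
    show (if h : i.1 < k then Rcol M r.1 ⟨i.1, h⟩ else 0) * _ = _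
    rw [dif_pos hik]
    simp only [hg]
    by_cases hc : j.1 ≤ r.1 ∧ r.1 ≤ j.1 + k
    · rw [if_pos hc, if_pos ⟨hc.1, hc.2, r.2⟩]
    · rw [if_neg hc, mul_zero, if_neg (fun hcc => hc ⟨hcc.1, hcc.2.1⟩)]
  rw [Finset.sum_congr rfl fun r _ => h1 r]
  rw [Fin.sum_univ_eq_sum_range g n]
  have hpad : ∑ r ∈ Finset.range n, g r = ∑ r ∈ Finset.range (n + k + 1), g r := by
    refine Finset.sum_subset (Finset.range_subset_range.mpr (by omega)) (fun r hr1 hr2 => ?_)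
    have hrn : ¬ r < n := fun hc => hr2 (Finset.mem_range.mpr hc)
    simp only [hg]
    exact if_neg (by omega)
  rw [hpad, Finset.range_eq_Ico]
  rw [← Finset.sum_Ico_consecutive g (Nat.zero_le j.1)
    (show j.1 ≤ n + k + 1 by have := j.2; omega)]
  rw [← Finset.sum_Ico_consecutive g (show j.1 ≤ j.1 + k + 1 by omega)
    (show j.1 + k + 1 ≤ n + k + 1 by have := j.2; omega)]
  have hz1 : ∑ r ∈ Finset.Ico 0 j.1, g r = 0 :=
    Finset.sum_eq_zero fun r hr => by
      have := (Finset.mem_Ico.mp hr).2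
      simp only [hg]
      exact if_neg (by omega)
  have hz2 : ∑ r ∈ Finset.Ico (j.1 + k + 1) (n + k + 1), g r = 0 :=
    Finset.sum_eq_zero fun r hr => by
      have := (Finset.mem_Ico.mp hr).1
      simp only [hg]
      exact if_neg (by omega)
  rw [hz1, hz2, zero_add, add_zero]
  rw [Finset.sum_Ico_eq_sum_range]
  have hkk : j.1 + k + 1 - j.1 = k + 1 := by omega
  rw [hkk]
  simp only [xval]
  refine Finset.sum_congr rfl fun m hm => ?_
  have hmk := Finset.mem_range.mp hm
  simp only [hg]
  by_cases hmn : j.1 + m < n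
  · rw [if_pos (show j.1 ≤ j.1 + m ∧ j.1 + m ≤ j.1 + k ∧ j.1 + m < n by omega), if_pos hmn]
    have e : j.1 + m - j.1 = m := by omega
    rw [e]
  · rw [if_neg (by omega), if_neg hmn]

lemma detY (n k : ℕ) (hk : 2 ≤ k) (M : Matrix (Fin k) (Fin k) ℂ) :
    (toSq n (bandY n k (aF n k M))).det = 1 := by
  have htri : (toSq n (bandY n k (aF n k M))).BlockTriangular OrderDual.toDual := by
    intro a b hab
    have hv : a < b := hab
    have hv2 : a.1 < b.1 := hv
    rw [Ym_apply]
    exact if_neg (by omega)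
  rw [Matrix.det_of_lowerTriangular _ htri]
  refine Finset.prod_eq_one fun a _ => ?_
  rw [Ym_apply]
  rw [if_pos ⟨le_refl _, by omega⟩]
  have e : a.1 - a.1 = 0 := by omega
  rw [e]
  exact ycoef_zero n k M a.1 (by omega)

lemma keyXY (n k : ℕ) (hk : 2 ≤ k) (hn : k < n) (M : Matrix (Fin k) (Fin k) ℂ)
    (hM : Ptr k M) :
    toSq n (bandX n k (aF n k M)) = PPm n k M * toSq n (bandY n k (aF n k M)) := by
  ext i j
  rw [Xm_apply n k hn M i j]
  by_cases hik : i.1 < k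
  · rw [sumPP n k hk hn M i hik j]
    by_cases hj : n - k + i.1 ≤ j.1
    · rw [dif_pos ⟨hik, hj⟩]
    · rw [dif_neg (fun hc => hj hc.2)]
      exact (kill n k hk hn M hM ⟨i.1, hik⟩ j.1 j.2 (by show j.1 < n - k + i.1; omega)).symm
  · rw [dif_neg (fun hc => hik hc.1)]
    rw [Matrix.mul_apply]
    symm
    refine Finset.sum_eq_zero fun r _ => ?_
    show (if h : i.1 < k then Rcol M r.1 ⟨i.1, h⟩ else 0) * _ = 0
    rw [dif_neg hik, zero_mul]

lemma hM_ptr (k : ℕ) (M : Matrix (Fin k) (Fin k) ℂ)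
    (hM : ∀ i : ℕ, 1 ≤ i → i ≤ k → sminor (extMat k M) i k ≠ 0) : Ptr k M := by
  intro t ht
  by_cases htk : t < k
  · have h := hM (t+1) (by omega) (by omega)
    have e : k + 1 - (t + 1) = k - t := by omega
    have heq : sminor (extMat k M) (t+1) k
        = (((M.submatrix (tembed k t) (tembed k t))).submatrix (finCongr e) (finCongr e)).det := by
      show (Matrix.of fun r c : Fin (k + 1 - (t+1)) =>
        extMat k M (t + 1 - 1 + r.1) (t + 1 - 1 + c.1)).det = _
      congr 1
      ext r c
      show extMat k M (t + 1 - 1 + r.1) (t + 1 - 1 + c.1)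
          = M (tembed k t (finCongr e r)) (tembed k t (finCongr e c))
      have hr : t + 1 - 1 + r.1 = t + r.1 := by omega
      have hc2 : t + 1 - 1 + c.1 = t + c.1 := by omega
      rw [hr, hc2]
      have hrk : t + r.1 < k := by have := r.2; omega
      have hck : t + c.1 < k := by have := c.2; omega
      show (if h : t + r.1 < k ∧ t + c.1 < k then M ⟨t + r.1, h.1⟩ ⟨t + c.1, h.2⟩ else 0) = _
      rw [dif_pos ⟨hrk, hck⟩]
      rfl
    rw [heq, Matrix.det_submatrix_equiv_self] at h
    exact h
  · have h0 : k - t = 0 := by omega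
    haveI : IsEmpty (Fin (k - t)) := by rw [h0]; infer_instance
    rw [tmin, Matrix.det_isEmpty]
    exact one_ne_zero

end S15

/-- every `k × k` complex matrix with nonzero trailing principal minors is
the top-left `k × k` block of `X Y⁻¹` for some band pair with nonzero lowest diagonal. -/
theorem statement15 (n k : ℕ) (hk : 2 ≤ k) (hn : k < n)
    (M : Matrix (Fin k) (Fin k) ℂ)
    (hM : ∀ i : ℕ, 1 ≤ i → i ≤ k → sminor (extMat k M) i k ≠ 0) :
    ∃ a : ℕ → ℕ → ℂ,
      (∀ j : ℕ, 1 ≤ j → j ≤ n → a (k + 1) j ≠ 0) ∧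
      bandUblock n k hn.le (toSq n (bandX n k a)) (toSq n (bandY n k a)) = M := by
  have hMp : S15.Ptr k M := S15.hM_ptr k M hM
  refine ⟨S15.aF n k M, ?_, ?_⟩
  · intro j hj1 hjn
    simp only [S15.aF]
    rw [dif_neg (by omega)]
    have e1 : j + (k+1) - (k+2) = j - 1 := by omega
    have e2 : k + 1 - (k+1) = 0 := by omega
    rw [e1, e2, S15.ycoef_zero n k M (j-1) (by omega)]
    exact one_ne_zero
  · have hdet1 : (toSq n (bandY n k (S15.aF n k M))).det = 1 := S15.detY n k hk M
    have hdet : IsUnit (toSq n (bandY n k (S15.aF n k M))).det := by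
      rw [hdet1]; exact isUnit_one
    ext i j
    show (toSq n (bandX n k (S15.aF n k M)) * (toSq n (bandY n k (S15.aF n k M)))⁻¹)
        (Fin.castLE hn.le i) (Fin.castLE hn.le j) = M i j
    rw [S15.keyXY n k hk hn M hMp, Matrix.mul_nonsing_inv_cancel_right _ _ hdet]
    show (if h : (Fin.castLE hn.le i).1 < k then
        S15.Rcol M (Fin.castLE hn.le j).1 ⟨(Fin.castLE hn.le i).1, h⟩ else 0) = M i j
    rw [dif_pos (show (Fin.castLE hn.le i).1 < k from i.2)]
    show (if h : (Fin.castLE hn.le j).1 < k then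
        S15.Wseq M 0 ⟨(Fin.castLE hn.le i).1, i.2⟩ ⟨(Fin.castLE hn.le j).1, h⟩
        else S15.Wseq M ((Fin.castLE hn.le j).1 - k + 1) ⟨(Fin.castLE hn.le i).1, i.2⟩ ⟨k-1, _⟩) = M i j
    rw [dif_pos (show (Fin.castLE hn.le j).1 < k from j.2)]
    show M ⟨i.1, i.2⟩ ⟨j.1, j.2⟩ = M i j
    congr 1 <;> exact Fin.ext rfl

end
end

section
/- In the generic band situation, for every 1 ≤ t ≤ k−1 the coefficient c_t ∈ R (defined by det(λY + μX) = λ^{n−k} Σ_{i=0}^{k} c_i μ^i λ^{k−i}) is an irreducible element of the polynomial ring R. -/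
open Matrix Finset

noncomputable section

/-!
Expanding `det (λY + μX)` along permutations, `c_t` is the signed sum, over permutations
`σ` and `t`-sets `S` of rows, of `∏_{i ∈ S} X_{i,σ i} ∏_{i ∉ S} Y_{i,σ i}`. Every nonzero
entry of row `i` of `X` or `Y` is one variable `a_{s,i}`, so `c_t` has degree one in the
variables of each row and none in the others. In a factorization `c_t = g h`, each factor is then
homogeneous in every row, so the rows split into those carried by `g` and those carried by
`h`; when both factors are non-units both classes are nonempty, and the coefficient of a
monomial in `g h` is the product of the coefficients of its two halves.

A monomial `∏ a_{s_i,i}` of `c_t` comes from a unique `(σ, S)`, determined by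
`s_i + i ≡ σ i + k + 1 (mod n)` with a wrap-around exactly in the `t` rows of `S`, so that
`∑ s_i = n (k + 1 - t)`. The cyclic shift by `t` gives the monomial with all `s_i = k + 1 - t`,
and its composite with the transposition of two adjacent rows `p, p + 1` lying in different
classes gives a second one. Gluing the half of the second monomial containing row `p` to the
other half of the first gives a monomial with `∑ s_i = n (k + 1 - t) + 1`, which would have a
nonzero coefficient in `g h = c_t`.
-/

namespace MvPolynomial

open Finsupp (weight)

section WeightedFactor

variable {σ R : Type*} [CommRing R] {w : σ → ℕ}

theorem weightedHomogeneousComponent_add_mul {p q : MvPolynomial σ R} {a b : ℕ}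
    (h : ∀ m₁ ∈ p.support, ∀ m₂ ∈ q.support,
      weight w m₁ + weight w m₂ = a + b → weight w m₁ = a) :
    weightedHomogeneousComponent w (a + b) (p * q) =
      weightedHomogeneousComponent w a p * weightedHomogeneousComponent w b q := by
  classical
  ext m
  simp only [coeff_weightedHomogeneousComponent, coeff_mul]
  split_ifs with hm
  · refine Finset.sum_congr rfl fun x hx => ?_
    rw [Finset.HasAntidiagonal.mem_antidiagonal] at hx
    by_cases hx₁ : x.1 ∈ p.support
    · by_cases hx₂ : x.2 ∈ q.support
      · have hsum : weight w x.1 + weight w x.2 = a + b := by rw [← map_add, hx, hm]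
        have ha := h _ hx₁ _ hx₂ hsum
        rw [if_pos ha, if_pos (by omega)]
      · simp [notMem_support_iff.mp hx₂]
    · simp [notMem_support_iff.mp hx₁]
  · refine (Finset.sum_eq_zero fun x hx => ?_).symm
    rw [Finset.HasAntidiagonal.mem_antidiagonal] at hx
    split_ifs with ha hb
    · exact absurd (by rw [← hx, map_add, ha, hb]) hm
    all_goals simp

theorem weightedHomogeneousComponent_weight_ne_zero {p : MvPolynomial σ R} {m : σ →₀ ℕ}
    (hm : m ∈ p.support) : weightedHomogeneousComponent w (weight w m) p ≠ 0 := by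
  intro h
  have := congr_arg (coeff m) h
  rw [coeff_weightedHomogeneousComponent, if_pos rfl, coeff_zero] at this
  exact mem_support_iff.mp hm this

theorem IsWeightedHomogeneous.of_mul [IsDomain R] {p q : MvPolynomial σ R} {d : ℕ}
    (hp : p ≠ 0) (hq : q ≠ 0) (h : IsWeightedHomogeneous w (p * q) d) :
    ∃ a b, a + b = d ∧ IsWeightedHomogeneous w p a ∧ IsWeightedHomogeneous w q b := by
  set W₁ := p.support.image (weight w)
  set W₂ := q.support.image (weight w)
  have hps : W₁.Nonempty := by simpa [W₁] using hp
  have hqs : W₂.Nonempty := by simpa [W₂] using hq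
  -- an isolated pair of weights multiplies to a nonzero component of `p * q`; the top weights
  -- and the bottom weights are such pairs, so both add up to `d`
  have key : ∀ m₁ ∈ p.support, ∀ m₂ ∈ q.support,
      (∀ m₁' ∈ p.support, ∀ m₂' ∈ q.support, weight w m₁' + weight w m₂' =
        weight w m₁ + weight w m₂ → weight w m₁' = weight w m₁) →
      weight w m₁ + weight w m₂ = d := by
    intro m₁ h₁ m₂ h₂ hiso
    by_contra hne
    apply mul_ne_zero (weightedHomogeneousComponent_weight_ne_zero (w := w) h₁)
      (weightedHomogeneousComponent_weight_ne_zero (w := w) h₂)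
    rw [← weightedHomogeneousComponent_add_mul hiso]
    exact h.weightedHomogeneousComponent_ne _ hne
  obtain ⟨M₁, hM₁, hM₁eq⟩ := Finset.mem_image.mp (W₁.max'_mem hps)
  obtain ⟨M₂, hM₂, hM₂eq⟩ := Finset.mem_image.mp (W₂.max'_mem hqs)
  obtain ⟨N₁, hN₁, hN₁eq⟩ := Finset.mem_image.mp (W₁.min'_mem hps)
  obtain ⟨N₂, hN₂, hN₂eq⟩ := Finset.mem_image.mp (W₂.min'_mem hqs)
  have le₁ : ∀ m ∈ p.support, weight w N₁ ≤ weight w m ∧ weight w m ≤ weight w M₁ :=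
    fun m hm => ⟨hN₁eq ▸ Finset.min'_le _ _ (Finset.mem_image_of_mem _ hm),
      hM₁eq ▸ Finset.le_max' _ _ (Finset.mem_image_of_mem _ hm)⟩
  have le₂ : ∀ m ∈ q.support, weight w N₂ ≤ weight w m ∧ weight w m ≤ weight w M₂ :=
    fun m hm => ⟨hN₂eq ▸ Finset.min'_le _ _ (Finset.mem_image_of_mem _ hm),
      hM₂eq ▸ Finset.le_max' _ _ (Finset.mem_image_of_mem _ hm)⟩
  have hmax := key M₁ hM₁ M₂ hM₂ fun m₁ h₁ m₂ h₂ _ => by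
    have := le₁ m₁ h₁; have := le₂ m₂ h₂; omega
  have hmin := key N₁ hN₁ N₂ hN₂ fun m₁ h₁ m₂ h₂ _ => by
    have := le₁ m₁ h₁; have := le₂ m₂ h₂; omega
  have := le₁ M₁ hM₁; have := le₂ M₂ hM₂
  refine ⟨weight w M₁, weight w M₂, hmax, fun m hm => ?_, fun m hm => ?_⟩
  · have := le₁ m (mem_support_iff.mpr hm); omega
  · have := le₂ m (mem_support_iff.mpr hm); omega

theorem IsWeightedHomogeneous.not_isUnit [IsDomain R] {f : MvPolynomial σ R} {d : ℕ}
    (h : IsWeightedHomogeneous w f d) (hf : f ≠ 0) (hd : d ≠ 0) : ¬IsUnit f := by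
  rintro ⟨u, rfl⟩
  obtain ⟨a, b, hab, hfa, -⟩ := IsWeightedHomogeneous.of_mul hf u⁻¹.ne_zero (w := w) (d := 0)
    (by rw [Units.mul_inv]; exact isWeightedHomogeneous_one _ _)
  have := hfa.inj_right hf h
  omega

end WeightedFactor

section FiberWeight

variable {σ ι : Type*} [DecidableEq ι] (ρ : σ → ι)

def fiberWeight (j : ι) : σ → ℕ := fun v => if ρ v = j then 1 else 0

theorem apply_le_weight_fiberWeight (m : σ →₀ ℕ) (v : σ) :
    m v ≤ weight (fiberWeight ρ (ρ v)) m :=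
  Finsupp.le_weight _ (by simp [fiberWeight]) m

variable {ρ} {K : Type*} [Field K]

theorem isUnit_of_forall_isWeightedHomogeneous_fiberWeight_zero {f : MvPolynomial σ K}
    (hf : f ≠ 0) (h : ∀ j, IsWeightedHomogeneous (fiberWeight ρ j) f 0) : IsUnit f := by
  have hC : f = C (coeff 0 f) := totalDegree_eq_zero_iff_eq_C.mp <|
    (totalDegree_eq_zero_iff _ f).mpr fun m hm v =>
      Nat.le_zero.mp (h (ρ v) (mem_support_iff.mp hm) ▸ apply_le_weight_fiberWeight ρ m v)
  rw [hC] at hf ⊢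
  exact (isUnit_iff_ne_zero.mpr fun h0 => hf (by rw [h0, map_zero])).map C

theorem coeff_mul_eq_coeff_filter_mul_coeff_filter {R : Type*} [CommRing R]
    {g h : MvPolynomial σ R} (P : Finset ι)
    (hg : ∀ j ∉ P, IsWeightedHomogeneous (fiberWeight ρ j) g 0)
    (hh : ∀ j ∈ P, IsWeightedHomogeneous (fiberWeight ρ j) h 0) (m : σ →₀ ℕ) :
    coeff m (g * h) = coeff (m.filter (ρ · ∈ P)) g * coeff (m.filter (ρ · ∉ P)) h := by
  classical
  rw [coeff_mul]
  refine Finset.sum_eq_single_of_mem (m.filter (ρ · ∈ P), m.filter (ρ · ∉ P))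
    (Finset.HasAntidiagonal.mem_antidiagonal.mpr (Finsupp.filter_add_filter_not _ _))
    fun x hx hne => ?_
  rw [Finset.HasAntidiagonal.mem_antidiagonal] at hx
  by_contra hx0
  have h₁ : ∀ v, ρ v ∉ P → x.1 v = 0 := fun v hv =>
    Nat.le_zero.mp (hg _ hv (left_ne_zero_of_mul hx0) ▸ apply_le_weight_fiberWeight ρ _ v)
  have h₂ : ∀ v, ρ v ∈ P → x.2 v = 0 := fun v hv =>
    Nat.le_zero.mp (hh _ hv (right_ne_zero_of_mul hx0) ▸ apply_le_weight_fiberWeight ρ _ v)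
  apply hne
  ext v <;> by_cases hv : ρ v ∈ P <;>
    simp [← hx, hv, h₁ v, h₂ v]

end FiberWeight

section Irreducible

variable {σ ι : Type*} [DecidableEq ι] {ρ : σ → ι}

theorem exists_subset_isWeightedHomogeneous_fiberWeight_of_mul {R : Type*} [CommRing R]
    [IsDomain R] {g h : MvPolynomial σ R} (hgh : g * h ≠ 0) (J : Finset ι)
    (hf : ∀ j, IsWeightedHomogeneous (fiberWeight ρ j) (g * h) (if j ∈ J then 1 else 0)) :
    ∃ Q ⊆ J, (∀ j ∉ Q, IsWeightedHomogeneous (fiberWeight ρ j) g 0) ∧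
      ∀ j ∉ J \ Q, IsWeightedHomogeneous (fiberWeight ρ j) h 0 := by
  choose a b hab hga hhb using fun j =>
    (hf j).of_mul (left_ne_zero_of_mul hgh) (right_ne_zero_of_mul hgh)
  refine ⟨J.filter (a · ≠ 0), Finset.filter_subset _ _, fun j hj => ?_, fun j hj => ?_⟩
  · have := hab j
    simp only [Finset.mem_filter, not_and_or, not_not] at hj
    split_ifs at this with hJ
    · exact hj.resolve_left (not_not.mpr hJ) ▸ hga j
    · exact (show a j = 0 by omega) ▸ hga j
  · have := hab j
    simp only [Finset.mem_sdiff, Finset.mem_filter, not_and, not_not] at hj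
    split_ifs at this with hJ
    · exact (show b j = 0 by have := hj hJ; omega) ▸ hhb j
    · exact (show b j = 0 by omega) ▸ hhb j

variable {K : Type*} [Field K]

theorem irreducible_of_isWeightedHomogeneous_fiberWeight {f : MvPolynomial σ K} (J : Finset ι)
    (hJ : J.Nonempty) (hf0 : f ≠ 0)
    (hf : ∀ j, IsWeightedHomogeneous (fiberWeight ρ j) f (if j ∈ J then 1 else 0))
    (hmix : ∀ Q ⊂ J, Q.Nonempty → ∃ m₁ m₂, coeff m₁ f ≠ 0 ∧ coeff m₂ f ≠ 0 ∧
      coeff (m₁.filter (ρ · ∈ Q) + m₂.filter (ρ · ∉ Q)) f = 0) :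
    Irreducible f := by
  obtain ⟨j₀, hj₀⟩ := hJ
  refine ⟨(hf j₀).not_isUnit hf0 (by simp [hj₀]), fun g h hgh => ?_⟩
  subst hgh
  obtain ⟨Q, hQJ, hg0, hh0⟩ := exists_subset_isWeightedHomogeneous_fiberWeight_of_mul hf0 J hf
  rcases Q.eq_empty_or_nonempty with hQe | hQne
  · exact .inl <| isUnit_of_forall_isWeightedHomogeneous_fiberWeight_zero
      (left_ne_zero_of_mul hf0) fun j => hg0 j (by simp [hQe])
  by_cases hQeq : Q = J
  · exact .inr <| isUnit_of_forall_isWeightedHomogeneous_fiberWeight_zero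
      (right_ne_zero_of_mul hf0) fun j => hh0 j (by simp [hQeq])
  obtain ⟨m₁, m₂, h₁, h₂, h₃⟩ := hmix Q (hQJ.ssubset_of_ne hQeq) hQne
  have hsplit := coeff_mul_eq_coeff_filter_mul_coeff_filter Q hg0
    fun j hj => hh0 j fun h => (Finset.mem_sdiff.mp h).2 hj
  rw [hsplit] at h₁ h₂ h₃
  have hfilter₁ : (m₁.filter (ρ · ∈ Q) + m₂.filter (ρ · ∉ Q)).filter (ρ · ∈ Q) =
      m₁.filter (ρ · ∈ Q) := by
    ext v; by_cases hv : ρ v ∈ Q <;> simp [hv]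
  have hfilter₂ : (m₁.filter (ρ · ∈ Q) + m₂.filter (ρ · ∉ Q)).filter (ρ · ∉ Q) =
      m₂.filter (ρ · ∉ Q) := by
    ext v; by_cases hv : ρ v ∈ Q <;> simp [hv]
  rw [hfilter₁, hfilter₂] at h₃
  exact absurd h₃ (mul_ne_zero (left_ne_zero_of_mul h₁) (right_ne_zero_of_mul h₂))

end Irreducible

theorem prod_X_mul_C_add_X_mul_C {ι R : Type*} [Fintype ι] [DecidableEq ι] [CommRing R]
    (a b : ι → R) :
    ∏ i, ((X 1 : MvPolynomial (Fin 2) R) * C (b i) + X 0 * C (a i)) =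
      ∑ S : Finset ι,
        monomial (Finsupp.single 0 (Fintype.card ι - S.card) + Finsupp.single 1 S.card)
          (∏ i, if i ∈ S then b i else a i) := by
  rw [Finset.prod_add, Finset.powerset_univ]
  refine Finset.sum_congr rfl fun S _ => ?_
  have hsplit :
      ∏ i, (if i ∈ S then b i else a i) = (∏ i ∈ S, b i) * ∏ i ∈ Sᶜ, a i := by
    rw [Finset.prod_ite]; congr 2 <;> ext <;> simp
  rw [← Finset.compl_eq_univ_sdiff, Finset.prod_mul_distrib, Finset.prod_mul_distrib,
    Finset.prod_const, Finset.prod_const, ← map_prod, ← map_prod, Finset.card_compl, hsplit,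
    monomial_single_add, ← C_mul_X_pow_eq_monomial, _root_.map_mul]
  ring

theorem coeff_X_pow_mul_sum {R : Type*} [CommRing R] (c : ℕ → R) {n k t : ℕ}
    (hkn : k ≤ n) (htk : t ≤ k) :
    coeff (Finsupp.single 0 (n - t) + Finsupp.single 1 t)
      ((X 0 : MvPolynomial (Fin 2) R) ^ (n - k) *
        ∑ i ∈ Finset.range (k + 1), C (c i) * X 1 ^ i * X 0 ^ (k - i)) = c t := by
  have hterm : ∀ i ∈ Finset.range (k + 1), (X 0 : MvPolynomial (Fin 2) R) ^ (n - k) *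
      (C (c i) * X 1 ^ i * X 0 ^ (k - i)) =
        monomial (Finsupp.single 0 (n - i) + Finsupp.single 1 i) (c i) := fun i hi => by
    have := Finset.mem_range.mp hi
    rw [monomial_single_add, ← C_mul_X_pow_eq_monomial, show n - i = n - k + (k - i) by omega,
      pow_add]
    ring
  have hexp : ∀ i, Finsupp.single (0 : Fin 2) (n - i) + Finsupp.single 1 i =
      Finsupp.single 0 (n - t) + Finsupp.single 1 t ↔ i = t :=
    fun i => ⟨fun h => by simpa using congr_arg (· 1) h, fun h => by rw [h]⟩
  rw [Finset.mul_sum, Finset.sum_congr rfl hterm, coeff_sum]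
  simp_rw [coeff_monomial, hexp]
  rw [Finset.sum_ite_eq', if_pos (Finset.mem_range.mpr (by omega))]

end MvPolynomial

namespace Matrix

open MvPolynomial Equiv

theorem coeff_det_X_smul_add_X_smul {ι R : Type*} [Fintype ι] [DecidableEq ι] [CommRing R]
    (A B : Matrix ι ι R) (t : ℕ) :
    coeff (Finsupp.single 0 (Fintype.card ι - t) + Finsupp.single 1 t)
        (det ((X 0 : MvPolynomial (Fin 2) R) • A.map (C : R →+* MvPolynomial (Fin 2) R) +
          (X 1 : MvPolynomial (Fin 2) R) • B.map (C : R →+* MvPolynomial (Fin 2) R))) =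
      ∑ σ : Perm ι, Perm.sign σ •
        ∑ S ∈ Finset.powersetCard t Finset.univ,
          ∏ i, if i ∈ S then B i (σ i) else A i (σ i) := by
  rw [← det_transpose, det_apply, coeff_sum]
  refine Finset.sum_congr rfl fun σ _ => ?_
  have hentry : ∀ i,
      ((X 0 : MvPolynomial (Fin 2) R) • A.map (C : R →+* MvPolynomial (Fin 2) R) +
        (X 1 : MvPolynomial (Fin 2) R) • B.map (C : R →+* MvPolynomial (Fin 2) R))ᵀ (σ i) i =
      (X 1 : MvPolynomial (Fin 2) R) * C (B i (σ i)) + X 0 * C (A i (σ i)) := fun i => by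
    simp [add_comm]
  have hexp : ∀ S : Finset ι, Finsupp.single (0 : Fin 2) (Fintype.card ι - S.card) +
      Finsupp.single 1 S.card = Finsupp.single 0 (Fintype.card ι - t) + Finsupp.single 1 t ↔
      S.card = t := fun S => ⟨fun h => by simpa using congr_arg (· 1) h, fun h => by rw [h]⟩
  simp_rw [Finset.prod_congr rfl fun i _ => hentry i, prod_X_mul_C_add_X_mul_C, Units.smul_def,
    coeff_smul, coeff_sum, coeff_monomial, hexp, Finset.powersetCard_eq_filter,
    Finset.powerset_univ, Finset.sum_filter]

end Matrix

theorem Fin.val_sub_add_val {n : ℕ} (τ i : Fin n) :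
    ((i - τ : Fin n) : ℕ) + τ = i + if i < τ then n else 0 := by
  split_ifs with h
  · rw [Fin.coe_sub_iff_lt.mpr h]; omega
  · rw [Fin.coe_sub_iff_le.mpr (not_lt.mp h)]; omega

theorem Equiv.Perm.sum_add_mul_card_eq {n c : ℕ} {σ : Perm (Fin n)} {S : Finset (Fin n)}
    {s : Fin n → ℕ}
    (h : ∀ i, s i + i + (if i ∈ S then n else 0) = σ i + c) :
    ∑ i, s i + n * S.card = n * c := by
  have hsum := Finset.sum_congr rfl fun i (_ : i ∈ univ) => h i
  simp only [Finset.sum_add_distrib, Finset.sum_ite_mem, Finset.univ_inter, Finset.sum_const,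
    smul_eq_mul, Finset.card_univ, Fintype.card_fin, Equiv.sum_comp σ (fun i : Fin n => (i : ℕ))]
    at hsum
  linarith

theorem Finset.exists_mem_iff_add_one_notMem {Q : Finset ℕ} {a b : ℕ} (ha : a ∈ Q)
    (hb : b ∉ Q) :
    ∃ j, min a b ≤ j ∧ j < max a b ∧ (j ∈ Q ↔ j + 1 ∉ Q) := by
  by_contra! h
  have hstep : ∀ m, min a b ≤ m → m ≤ max a b → (min a b ∈ Q ↔ m ∈ Q) := by
    intro m hm
    induction m, hm using Nat.le_induction with
    | base => exact fun _ => Iff.rfl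
    | succ m hm ih =>
      intro hmax
      rw [ih (by omega)]
      have := h m hm (by omega)
      tauto
  have := hstep a (min_le_left a b) (le_max_left a b)
  have := hstep b (min_le_right a b) (le_max_right a b)
  tauto

namespace GenericBand

open MvPolynomial Equiv Finset

def bandEntry (n k : ℕ) (σ : Perm (Fin n)) (S : Finset (Fin n)) (i : Fin n) : Rband :=
  if i ∈ S then bandX n k genA i (σ i) else bandY n k genA i (σ i)

/-- The coefficient `c_t`, in the form given by `Matrix.coeff_det_X_smul_add_X_smul`. -/
def bandCoeff (n k t : ℕ) : Rband :=
  ∑ σ : Perm (Fin n), Perm.sign σ • ∑ S ∈ powersetCard t univ, ∏ i, bandEntry n k σ S i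

/-- The exponent of `∏ᵢ a_{s i, i+1}`: the 0-based row `i` carries the variables
`a_{·, i+1}`. -/
def rowMonomial {n : ℕ} (s : Fin n → ℕ) : ℕ × ℕ →₀ ℕ :=
  ∑ i, Finsupp.single (s i, (i : ℕ) + 1) 1

variable {n k t : ℕ}

theorem bandEntry_eq_zero_or (σ : Perm (Fin n)) (S : Finset (Fin n)) (i : Fin n) :
    bandEntry n k σ S i = 0 ∨ ∃ s, bandEntry n k σ S i = X (s, (i : ℕ) + 1) := by
  unfold bandEntry bandX bandY genA
  split_ifs <;> simp

theorem bandEntry_eq_X_iff (hkn : k < n) (σ : Perm (Fin n)) (S : Finset (Fin n)) (i : Fin n)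
    (s : ℕ) : bandEntry n k σ S i = X (s, (i : ℕ) + 1) ↔
      1 ≤ s ∧ s ≤ k + 1 ∧ s + i + (if i ∈ S then n else 0) = σ i + k + 1 := by
  have := i.isLt
  have := (σ i).isLt
  unfold bandEntry bandX bandY genA
  split_ifs <;> simp [X_inj, (X_ne_zero _).symm] <;> omega

theorem prod_X_eq_monomial_rowMonomial (s : Fin n → ℕ) :
    ∏ i, (X (s i, (i : ℕ) + 1) : Rband) = monomial (rowMonomial s) 1 := by
  rw [rowMonomial, monomial_sum_one]
  rfl

theorem rowMonomial_apply (s : Fin n → ℕ) (i : Fin n) (x : ℕ) :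
    rowMonomial s (x, (i : ℕ) + 1) = if x = s i then 1 else 0 := by
  simp only [rowMonomial, Finsupp.finsetSum_apply, Finsupp.single_apply, Prod.mk.injEq,
    add_left_inj, Fin.val_inj]
  rw [Finset.sum_eq_single i (fun j _ hj => if_neg fun h => hj h.2) (by simp)]
  simp [eq_comm]

theorem rowMonomial_injective : Function.Injective (rowMonomial (n := n)) := fun s s' h =>
  funext fun i => by simpa [rowMonomial_apply] using congr($h (s i, (i : ℕ) + 1))

theorem coeff_rowMonomial_prod_bandEntry (σ : Perm (Fin n)) (S : Finset (Fin n))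
    (s : Fin n → ℕ) : coeff (rowMonomial s) (∏ i, bandEntry n k σ S i) =
      if ∀ i, bandEntry n k σ S i = X (s i, (i : ℕ) + 1) then 1 else 0 := by
  by_cases h0 : ∃ i, bandEntry n k σ S i = 0
  · obtain ⟨i, hi⟩ := h0
    rw [Finset.prod_eq_zero (Finset.mem_univ i) hi, coeff_zero,
      if_neg fun h => X_ne_zero _ ((h i).symm.trans hi)]
  simp only [not_exists] at h0
  choose s' hs' using fun i => (bandEntry_eq_zero_or σ S i).resolve_left (h0 i)
  simp only [hs', prod_X_eq_monomial_rowMonomial, coeff_monomial, rowMonomial_injective.eq_iff,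
    X_inj, Prod.mk.injEq, and_true, funext_iff]

theorem coeff_rowMonomial_bandCoeff (s : Fin n → ℕ) :
    coeff (rowMonomial s) (bandCoeff n k t) = ∑ σ : Perm (Fin n), Perm.sign σ •
      ∑ S ∈ powersetCard t univ,
        if ∀ i, bandEntry n k σ S i = X (s i, (i : ℕ) + 1) then (1 : ℂ) else 0 := by
  simp only [bandCoeff, coeff_sum, Units.smul_def, coeff_smul, coeff_rowMonomial_prod_bandEntry]

theorem eq_of_bandEntry_eq_X (hkn : k < n) {σ σ' : Perm (Fin n)} {S S' : Finset (Fin n)}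
    {s : Fin n → ℕ} (h : ∀ i, bandEntry n k σ S i = X (s i, (i : ℕ) + 1))
    (h' : ∀ i, bandEntry n k σ' S' i = X (s i, (i : ℕ) + 1)) : σ = σ' ∧ S = S' := by
  have key : ∀ i, (σ i : ℕ) = σ' i ∧ (i ∈ S ↔ i ∈ S') := fun i => by
    obtain ⟨-, -, h₁⟩ := (bandEntry_eq_X_iff hkn σ S i (s i)).mp (h i)
    obtain ⟨-, -, h₂⟩ := (bandEntry_eq_X_iff hkn σ' S' i (s i)).mp (h' i)
    -- both `σ i` and `σ' i` lie in `[0, n)`, so the wrap-around terms must agree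
    have hS : i ∈ S ↔ i ∈ S' := by
      have := (σ i).isLt
      have := (σ' i).isLt
      by_cases hi : i ∈ S <;> by_cases hi' : i ∈ S' <;>
        simp only [hi, hi', if_true, if_false] at h₁ h₂ ⊢ <;> omega
    simp only [hS] at h₁
    exact ⟨by omega, hS⟩
  exact ⟨Equiv.ext fun i => Fin.ext (key i).1, Finset.ext fun i => (key i).2⟩

theorem sum_add_mul_eq_of_coeff_rowMonomial_bandCoeff_ne_zero (hkn : k < n)
    {s : Fin n → ℕ} (h : coeff (rowMonomial s) (bandCoeff n k t) ≠ 0) :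
    ∑ i, s i + n * t = n * (k + 1) := by
  rw [coeff_rowMonomial_bandCoeff] at h
  obtain ⟨σ, -, hσ⟩ := Finset.exists_ne_zero_of_sum_ne_zero h
  obtain ⟨S, hS, hS'⟩ := Finset.exists_ne_zero_of_sum_ne_zero (right_ne_zero_of_smul hσ)
  rw [ne_eq, ite_eq_right_iff, Classical.not_imp] at hS'
  rw [← (Finset.mem_powersetCard_univ.mp hS)]
  exact Perm.sum_add_mul_card_eq fun i => ((bandEntry_eq_X_iff hkn σ S i (s i)).mp (hS'.1 i)).2.2

theorem coeff_rowMonomial_bandCoeff_ne_zero (hkn : k < n) {σ : Perm (Fin n)}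
    {S : Finset (Fin n)} {s : Fin n → ℕ} (hs : ∑ i, s i + n * t = n * (k + 1))
    (h : ∀ i, bandEntry n k σ S i = X (s i, (i : ℕ) + 1)) :
    coeff (rowMonomial s) (bandCoeff n k t) ≠ 0 := by
  have hS : S.card = t := by
    have := Perm.sum_add_mul_card_eq (c := k + 1) fun i =>
      ((bandEntry_eq_X_iff hkn σ S i (s i)).mp (h i)).2.2
    exact Nat.eq_of_mul_eq_mul_left (by omega : 0 < n) (by omega)
  rw [coeff_rowMonomial_bandCoeff, Finset.sum_eq_single σ, Finset.sum_eq_single S, if_pos h]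
  · simp [Units.smul_def]
  · exact fun S' _ hS' => if_neg fun h' => hS' (eq_of_bandEntry_eq_X hkn h' h).2
  · simp [hS]
  · exact fun σ' _ hσ' => by
      rw [Finset.sum_eq_zero fun S' _ => if_neg fun h' => hσ' (eq_of_bandEntry_eq_X hkn h' h).1,
        smul_zero]
  · simp

theorem isWeightedHomogeneous_bandCoeff (j : ℕ) :
    IsWeightedHomogeneous (fiberWeight Prod.snd j) (bandCoeff n k t)
      (if j ∈ Icc 1 n then 1 else 0) := by
  have hdeg :
      ∑ i : Fin n, (if (i : ℕ) + 1 = j then 1 else 0) = if j ∈ Icc 1 n then 1 else 0 := by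
    simp only [Finset.mem_Icc]
    split_ifs with hj
    · rw [Finset.sum_eq_single ⟨j - 1, by omega⟩ (fun i _ hi => if_neg fun h => hi (Fin.ext
        (by simp; omega))) (by simp), if_pos (by simp; omega)]
    · exact Finset.sum_eq_zero fun i _ => if_neg fun h => hj ⟨by omega, by omega⟩
  have hentry : ∀ σ S (i : Fin n), IsWeightedHomogeneous (fiberWeight Prod.snd j)
      (bandEntry n k σ S i) (if (i : ℕ) + 1 = j then 1 else 0) := fun σ S i => by
    rcases bandEntry_eq_zero_or σ S i with h | ⟨s, h⟩ <;> rw [h]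
    exacts [isWeightedHomogeneous_zero _ _ _, isWeightedHomogeneous_X ℂ _ _]
  rw [← hdeg]
  refine IsWeightedHomogeneous.sum _ _ _ fun σ _ d hd => ?_
  rw [coeff_smul] at hd
  exact IsWeightedHomogeneous.sum _ _ _ (fun S _ => IsWeightedHomogeneous.prod _ _ _
    fun i _ => hentry σ S i) (right_ne_zero_of_smul hd)

theorem bandEntry_filter_lt_eq_X (hkn : k < n) (σ : Perm (Fin n)) {s : Fin n → ℕ} {i : Fin n}
    (h₁ : 1 ≤ s i) (h₂ : s i ≤ k + 1)
    (h : s i + i = σ i + k + 1 ∨ s i + i + n = σ i + k + 1) :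
    bandEntry n k σ {j | j < σ j} i = X (s i, (i : ℕ) + 1) := by
  have := (σ i).isLt
  rw [bandEntry_eq_X_iff hkn]
  simp only [Finset.mem_filter, Finset.mem_univ, true_and, Fin.lt_def]
  split_ifs <;> omega

/-- The witness is `σ i = π i - t` in `Fin n`, reading `X` in the rows where `σ` wraps around. -/
theorem coeff_rowMonomial_bandCoeff_ne_zero_of_perm (hkn : k < n) (htk : t ≤ k)
    (π : Perm (Fin n)) {s : Fin n → ℕ} (hs : ∀ i, s i + i = k + 1 - t + π i)
    (h₁ : ∀ i, 1 ≤ s i) (h₂ : ∀ i, s i ≤ k + 1) :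
    coeff (rowMonomial s) (bandCoeff n k t) ≠ 0 := by
  have : NeZero n := ⟨by omega⟩
  set τ : Fin n := ⟨t, by omega⟩
  have hτ : (τ : ℕ) = t := rfl
  refine coeff_rowMonomial_bandCoeff_ne_zero hkn ?_ fun i =>
    bandEntry_filter_lt_eq_X hkn (Equiv.subRight τ * π) (h₁ i) (h₂ i) ?_
  · have hsum := Finset.sum_congr rfl fun i (_ : i ∈ univ) => hs i
    simp only [Finset.sum_add_distrib, Finset.sum_const, Finset.card_univ, Fintype.card_fin,
      smul_eq_mul, Equiv.sum_comp π (fun i : Fin n => (i : ℕ))] at hsum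
    rw [Nat.add_right_cancel hsum, ← Nat.mul_add, Nat.sub_add_cancel (by omega)]
  · have hwrap := Fin.val_sub_add_val τ (π i)
    have := hs i
    simp only [Perm.mul_apply, Equiv.subRight_apply]
    simp only [Fin.lt_def] at hwrap
    split_ifs at hwrap <;> omega

theorem coeff_rowMonomial_const_bandCoeff_ne_zero (hkn : k < n) (htk : t ≤ k) :
    coeff (rowMonomial (n := n) fun _ => k + 1 - t) (bandCoeff n k t) ≠ 0 :=
  coeff_rowMonomial_bandCoeff_ne_zero_of_perm hkn htk 1 (fun _ => rfl) (fun _ => by omega)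
    (fun _ => by omega)

theorem bandCoeff_ne_zero (hkn : k < n) (htk : t ≤ k) : bandCoeff n k t ≠ 0 := fun h =>
  coeff_rowMonomial_const_bandCoeff_ne_zero hkn htk (by rw [h, coeff_zero])

theorem rowMonomial_filter_add_filter (Q : Finset ℕ) (s₁ s₂ : Fin n → ℕ) :
    (rowMonomial s₁).filter (·.2 ∈ Q) + (rowMonomial s₂).filter (·.2 ∉ Q) =
      rowMonomial fun i => if (i : ℕ) + 1 ∈ Q then s₁ i else s₂ i := by
  simp only [rowMonomial, Finsupp.filter_sum, ← Finset.sum_add_distrib]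
  refine Finset.sum_congr rfl fun i _ => ?_
  split_ifs with hi
  · rw [Finsupp.filter_single_of_pos (fun x : ℕ × ℕ => x.2 ∈ Q) hi,
      Finsupp.filter_single_of_neg (fun x : ℕ × ℕ => x.2 ∉ Q) (not_not.mpr hi), add_zero]
  · rw [Finsupp.filter_single_of_neg (fun x : ℕ × ℕ => x.2 ∈ Q) hi,
      Finsupp.filter_single_of_pos (fun x : ℕ × ℕ => x.2 ∉ Q) hi, zero_add]

theorem coeff_rowMonomial_swap_bandCoeff_ne_zero (hkn : k < n) (ht₁ : 1 ≤ t)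
    (ht₂ : t ≤ k - 1) {p q : Fin n} (hpq : (q : ℕ) = p + 1) :
    coeff (rowMonomial fun i => k + 1 - t + swap p q i - i) (bandCoeff n k t) ≠ 0 := by
  have hswap : ∀ i, (swap p q i : ℕ) = if i = p then q else if i = q then p else i :=
    fun i => by rw [swap_apply_def, apply_ite Fin.val, apply_ite Fin.val]
  refine coeff_rowMonomial_bandCoeff_ne_zero_of_perm hkn (by omega) (swap p q) (fun i => ?_)
    (fun i => ?_) (fun i => ?_) <;>
  · rw [hswap i]
    split_ifs with h₁ h₂ <;> simp only [Fin.ext_iff] at * <;> omega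

theorem coeff_rowMonomial_bandCoeff_eq_zero_of_eq_add_one (hkn : k < n) (htk : t ≤ k)
    {p : Fin n} {s : Fin n → ℕ} (hsp : s p = k + 2 - t) (hs : ∀ i ≠ p, s i = k + 1 - t) :
    coeff (rowMonomial s) (bandCoeff n k t) = 0 := by
  have hs' : s = fun i => k + 1 - t + if i = p then 1 else 0 := funext fun i => by
    by_cases hip : i = p
    · rw [hip, hsp, if_pos rfl]; omega
    · rw [hs i hip, if_neg hip, add_zero]
  by_contra h
  have hsum := sum_add_mul_eq_of_coeff_rowMonomial_bandCoeff_ne_zero hkn h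
  simp only [hs', Finset.sum_add_distrib, Finset.sum_const, Finset.card_univ, Fintype.card_fin,
    smul_eq_mul, Finset.sum_ite_eq', Finset.mem_univ, if_true] at hsum
  rw [add_right_comm, ← Nat.mul_add, Nat.sub_add_cancel (by omega)] at hsum
  omega

theorem exists_coeff_bandCoeff_filter_add_filter_eq_zero (hkn : k < n) (ht₁ : 1 ≤ t)
    (ht₂ : t ≤ k - 1) {Q : Finset ℕ} (hQ : Q ⊂ Icc 1 n) (hQne : Q.Nonempty) :
    ∃ m₁ m₂, coeff m₁ (bandCoeff n k t) ≠ 0 ∧ coeff m₂ (bandCoeff n k t) ≠ 0 ∧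
      coeff (m₁.filter (·.2 ∈ Q) + m₂.filter (·.2 ∉ Q)) (bandCoeff n k t) = 0 := by
  obtain ⟨a, ha⟩ := hQne
  obtain ⟨b, hbJ, hb⟩ := Finset.exists_of_ssubset hQ
  have haJ := Finset.mem_Icc.mp (hQ.subset ha)
  have hbJ := Finset.mem_Icc.mp hbJ
  obtain ⟨j, hj₁, hj₂, hjQ⟩ := Finset.exists_mem_iff_add_one_notMem ha hb
  -- `p` and `q` are the 0-based indices of the adjacent rows `j` and `j + 1`
  obtain ⟨p, hp⟩ : ∃ p : Fin n, (p : ℕ) + 1 = j :=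
    ⟨⟨j - 1, by omega⟩, by simp only; omega⟩
  obtain ⟨q, hq⟩ : ∃ q : Fin n, (q : ℕ) + 1 = j + 1 := ⟨⟨j, by omega⟩, rfl⟩
  have hc := coeff_rowMonomial_const_bandCoeff_ne_zero hkn (t := t) (by omega)
  have he := coeff_rowMonomial_swap_bandCoeff_ne_zero hkn ht₁ ht₂ (p := p) (q := q) (by omega)
  by_cases hjQ' : j ∈ Q
  · refine ⟨_, _, he, hc, ?_⟩
    rw [rowMonomial_filter_add_filter]
    refine coeff_rowMonomial_bandCoeff_eq_zero_of_eq_add_one hkn (p := p) (by omega) ?_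
      fun i hip => ?_
    · simp only [hp, hjQ', if_true, swap_apply_left]; omega
    · by_cases hiq : i = q
      · simp only [hiq, hq, hjQ.mp hjQ', if_false]
      · split_ifs <;> simp only [swap_apply_of_ne_of_ne hip hiq]; omega
  · refine ⟨_, _, hc, he, ?_⟩
    rw [rowMonomial_filter_add_filter]
    refine coeff_rowMonomial_bandCoeff_eq_zero_of_eq_add_one hkn (p := p) (by omega) ?_
      fun i hip => ?_
    · simp only [hp, hjQ', if_false, swap_apply_left]; omega
    · by_cases hiq : i = q
      · simp only [hiq, hq, not_not.mp (mt hjQ.mpr hjQ'), if_true]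
      · split_ifs <;> simp only [swap_apply_of_ne_of_ne hip hiq]; omega

theorem coeff_detLM_bandX_bandY (t : ℕ) :
    coeff (Finsupp.single 0 (n - t) + Finsupp.single 1 t)
      (detLM n (bandX n k genA) (bandY n k genA)) = bandCoeff n k t := by
  have := Matrix.coeff_det_X_smul_add_X_smul (toSq n (bandY n k genA)) (toSq n (bandX n k genA)) t
  rw [Fintype.card_fin] at this
  exact this

end GenericBand

theorem statement16_general (n k : ℕ) (hn : k < n) (c : ℕ → Rband)
    (hc : detLM n (bandX n k genA) (bandY n k genA)
        = (MvPolynomial.X 0 : MvPolynomial (Fin 2) Rband) ^ (n - k)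
          * ∑ i ∈ Finset.range (k + 1), MvPolynomial.C (c i)
              * (MvPolynomial.X 1 : MvPolynomial (Fin 2) Rband) ^ i
              * (MvPolynomial.X 0 : MvPolynomial (Fin 2) Rband) ^ (k - i)) :
    ∀ t : ℕ, 1 ≤ t → t ≤ k - 1 → Irreducible (c t) := by
  intro t ht₁ ht₂
  rw [← MvPolynomial.coeff_X_pow_mul_sum c hn.le (by omega : t ≤ k), ← hc,
    GenericBand.coeff_detLM_bandX_bandY]
  exact MvPolynomial.irreducible_of_isWeightedHomogeneous_fiberWeight (Finset.Icc 1 n)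
    ⟨1, by simp; omega⟩ (GenericBand.bandCoeff_ne_zero hn (by omega))
    GenericBand.isWeightedHomogeneous_bandCoeff fun _ hQ hQne =>
      GenericBand.exists_coeff_bandCoeff_filter_add_filter_eq_zero hn ht₁ ht₂ hQ hQne

/-- in the generic band situation the coefficients `c_t`, `1 ≤ t ≤ k-1`,
are irreducible. -/
theorem statement16 (n k : ℕ) (hk : 2 ≤ k) (hn : k < n) (c : ℕ → Rband)
    (hc : detLM n (bandX n k genA) (bandY n k genA)
        = (MvPolynomial.X 0 : MvPolynomial (Fin 2) Rband) ^ (n - k)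
          * ∑ i ∈ Finset.range (k + 1), MvPolynomial.C (c i)
              * (MvPolynomial.X 1 : MvPolynomial (Fin 2) Rband) ^ i
              * (MvPolynomial.X 0 : MvPolynomial (Fin 2) Rband) ^ (k - i)) :
    ∀ t : ℕ, 1 ≤ t → t ≤ k - 1 → Irreducible (c t) :=
  statement16_general n k hn c hc

end
end

section
/- Let m ≥ 3 and let B be an m×(m+1) matrix over a commutative ring. Then det B_{1̂2̂}^{1̂m̂(m+1)̂} · det B_{1̂}^{1̂2̂} · det B^{(m+1)̂} + det B_{1̂2̂}^{1̂2̂(m+1)̂} · det B_{1̂}^{m̂(m+1)̂} · det B^{1̂} = det B_{1̂}^{1̂(m+1)̂} · ( det B_{1̂2̂}^{1̂m̂(m+1)̂} · det B^{2̂} − det B_{1̂2̂}^{2̂m̂(m+1)̂} · det B^{1̂} ). -/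
open Matrix Finset

noncomputable section

/-!
Indices below are 1-based, as in the statement; the code indexes by `Fin`, from `0`.

The signed maximal minors `w_j = (-1)^j det B^{ĵ}` of an `m × (m+1)` matrix `B` form a vector in
its kernel. For the columns `c_j` of `B_{1̂}` this reads `∑ w_j c_j = 0`; applying the linear form
`x ↦ det [x, c_3, …, c_m]`, which kills `c_3, …, c_m`, gives the three-term Plücker relation
`det B^{1̂} det B_{1̂}^{2̂(m+1)̂} + det B^{(m+1)̂} det B_{1̂}^{1̂2̂} = det B^{2̂} det B_{1̂}^{1̂(m+1)̂}`.
The theorem is this relation for `B`, times `det B_{1̂2̂}^{1̂m̂(m+1)̂}`, plus the same relation for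
`B_{1̂}^{(m+1)̂}`, times `det B^{1̂}`.
-/

theorem Fin.one_succAbove_eq_ite {n : ℕ} (j : Fin (n + 1)) :
    (1 : Fin (n + 2)).succAbove j = if (j : ℕ) = 0 then 0 else j.succ := by
  cases j using Fin.cases <;> simp

namespace Matrix

variable {R : Type*} [CommRing R]

def signedMinors {m : ℕ} (B : Matrix (Fin m) (Fin (m + 1)) R) (j : Fin (m + 1)) : R :=
  (-1) ^ (j : ℕ) * (B.submatrix id j.succAbove).det

theorem mulVec_signedMinors_eq_zero {m : ℕ} (B : Matrix (Fin m) (Fin (m + 1)) R) :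
    B *ᵥ B.signedMinors = 0 := by
  ext i
  -- `B` with row `i` repeated on top; expand along that row
  have h : (B.submatrix (Fin.cons i id) id).det = 0 :=
    det_zero_of_row_eq (Fin.succ_ne_zero i).symm rfl
  rw [det_succ_row_zero] at h
  calc (B *ᵥ B.signedMinors) i
      = ∑ j : Fin (m + 1), (-1) ^ (j : ℕ) * B i j * (B.submatrix id j.succAbove).det := by
        simp only [mulVec, dotProduct, signedMinors]
        exact Finset.sum_congr rfl fun j _ => by ring
    _ = 0 := h

theorem det_updateCol_zero_last {n : ℕ} (C : Matrix (Fin (n + 1)) (Fin (n + 3)) R) :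
    ((C.submatrix id fun j => j.castSucc.succ).updateCol 0 fun i => C i (Fin.last _)).det
      = (-1) ^ n * (C.submatrix id fun j => j.succ.succ).det := by
  have h : (C.submatrix id fun j => j.succ.succ) =
      ((C.submatrix id fun j => j.castSucc.succ).updateCol 0 fun i => C i (Fin.last _)).submatrix
        id (finRotate (n + 1)) := by
    ext i j
    induction j using Fin.lastCases <;> simp
  rw [h, det_permute', sign_finRotate, ← mul_assoc]
  simp [← mul_pow]

theorem det_three_term_of_mulVec_eq_zero {n : ℕ} (C : Matrix (Fin (n + 1)) (Fin (n + 3)) R)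
    {w : Fin (n + 3) → R} (hw : C *ᵥ w = 0) :
    w 0 * (C.submatrix id fun j => ((1 : Fin (n + 2)).succAbove j).castSucc).det
      + w 1 * (C.submatrix id fun j => j.castSucc.succ).det
      + (-1) ^ n * w (Fin.last _) * (C.submatrix id fun j => j.succ.succ).det = 0 := by
  set A := C.submatrix id fun j : Fin (n + 1) => j.castSucc.succ
  have hA : A.updateCol 0 (fun i => C i 0) =
      C.submatrix id fun j => ((1 : Fin (n + 2)).succAbove j).castSucc := by
    ext i j
    cases j using Fin.cases <;> simp [A]
  have hcomb : (w 0 • fun i => C i 0) + (w (Fin.last _) • fun i => C i (Fin.last _))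
      = fun i => ∑ j, (-w j.castSucc.succ) • A i j := by
    ext i
    have hi := congrFun hw i
    rw [mulVec, dotProduct, Fin.sum_univ_succ, Fin.sum_univ_castSucc, Fin.succ_last] at hi
    simp only [Pi.add_apply, Pi.smul_apply, Pi.zero_apply, smul_eq_mul, neg_mul,
      Finset.sum_neg_distrib, A, submatrix_apply, id, mul_comm (w _)] at hi ⊢
    linear_combination hi
  have h := congrArg det (congrArg (A.updateCol 0) hcomb)
  rw [det_updateCol_add, det_updateCol_smul, det_updateCol_smul, det_updateCol_sum, hA,
    det_updateCol_zero_last, Fin.castSucc_zero, Fin.succ_zero_eq_one, smul_eq_mul] at h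
  linear_combination h

theorem plucker_three_term {n : ℕ} (B : Matrix (Fin (n + 2)) (Fin (n + 3)) R) :
    (B.submatrix id Fin.succ).det
        * (B.submatrix Fin.succ fun j => ((1 : Fin (n + 2)).succAbove j).castSucc).det
      + (B.submatrix id Fin.castSucc).det * (B.submatrix Fin.succ fun j => j.succ.succ).det
      = (B.submatrix id (Fin.succAbove 1)).det
        * (B.submatrix Fin.succ fun j => j.castSucc.succ).det := by
  have h := det_three_term_of_mulVec_eq_zero (B.submatrix Fin.succ id) (w := B.signedMinors)
    (funext fun i => congrFun (mulVec_signedMinors_eq_zero B) i.succ)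
  simp only [signedMinors, Fin.val_zero, Fin.val_one, Fin.val_last, Fin.succAbove_zero,
    Fin.succAbove_last, submatrix_submatrix, Function.comp_id, Function.id_comp] at h
  have hsign : (-1 : R) ^ n * (-1) ^ (n + 2) = 1 := by
    rw [← pow_add]
    exact Even.neg_one_pow ⟨n + 1, by ring⟩
  linear_combination h - (B.submatrix id Fin.castSucc).det
    * (B.submatrix Fin.succ fun j => j.succ.succ).det * hsign

theorem det_pluckpluck {n : ℕ} (B : Matrix (Fin (n + 3)) (Fin (n + 4)) R) :
    (B.submatrix (fun i : Fin (n + 1) => i.succ.succ)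
          fun j : Fin (n + 1) => j.castSucc.castSucc.succ).det
        * (B.submatrix Fin.succ fun j => j.succ.succ).det * (B.submatrix id Fin.castSucc).det
      + (B.submatrix (fun i : Fin (n + 1) => i.succ.succ)
          fun j : Fin (n + 1) => j.castSucc.succ.succ).det
        * (B.submatrix Fin.succ fun j => j.castSucc.castSucc).det * (B.submatrix id Fin.succ).det
      = (B.submatrix Fin.succ fun j => j.castSucc.succ).det
        * ((B.submatrix (fun i : Fin (n + 1) => i.succ.succ)
              fun j : Fin (n + 1) => j.castSucc.castSucc.succ).det
            * (B.submatrix id (Fin.succAbove 1)).det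
          - (B.submatrix (fun i : Fin (n + 1) => i.succ.succ)
              fun j : Fin (n + 1) => ((1 : Fin (n + 2)).succAbove j).castSucc.castSucc).det
            * (B.submatrix id Fin.succ).det) := by
  have hB := plucker_three_term B
  have hB' := plucker_three_term (B.submatrix Fin.succ Fin.castSucc)
  simp only [submatrix_submatrix, Function.comp_def, id_eq, ← Fin.succ_castSucc] at hB'
  linear_combination (B.submatrix (fun i : Fin (n + 1) => i.succ.succ)
      fun j : Fin (n + 1) => j.castSucc.castSucc.succ).det * hB
    + (B.submatrix id Fin.succ).det * hB'

end Matrix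

/-- the three-term identity \eqref{pluckpluck} for an `m × (m+1)` matrix. -/
theorem statement19 {α : Type*} [CommRing α] (m : ℕ) (hm : 3 ≤ m)
    (B : Matrix (Fin m) (Fin (m + 1)) α) :
    (Matrix.of fun i j : Fin (m - 2) =>
        B ⟨(i : ℕ) + 2, by have := i.isLt; omega⟩
          ⟨(j : ℕ) + 1, by have := j.isLt; omega⟩).det
      * (Matrix.of fun i j : Fin (m - 1) =>
          B ⟨(i : ℕ) + 1, by have := i.isLt; omega⟩
            ⟨(j : ℕ) + 2, by have := j.isLt; omega⟩).det
      * (Matrix.of fun i j : Fin m =>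
          B i ⟨(j : ℕ), by have := j.isLt; omega⟩).det
    + (Matrix.of fun i j : Fin (m - 2) =>
          B ⟨(i : ℕ) + 2, by have := i.isLt; omega⟩
            ⟨(j : ℕ) + 2, by have := j.isLt; omega⟩).det
      * (Matrix.of fun i j : Fin (m - 1) =>
          B ⟨(i : ℕ) + 1, by have := i.isLt; omega⟩
            ⟨(j : ℕ), by have := j.isLt; omega⟩).det
      * (Matrix.of fun i j : Fin m =>
          B i ⟨(j : ℕ) + 1, by have := j.isLt; omega⟩).det
    = (Matrix.of fun i j : Fin (m - 1) =>
          B ⟨(i : ℕ) + 1, by have := i.isLt; omega⟩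
            ⟨(j : ℕ) + 1, by have := j.isLt; omega⟩).det
      * ((Matrix.of fun i j : Fin (m - 2) =>
            B ⟨(i : ℕ) + 2, by have := i.isLt; omega⟩
              ⟨(j : ℕ) + 1, by have := j.isLt; omega⟩).det
          * (Matrix.of fun i j : Fin m =>
              B i (if (j : ℕ) = 0 then ⟨0, by omega⟩
                else ⟨(j : ℕ) + 1, by have := j.isLt; omega⟩)).det
        - (Matrix.of fun i j : Fin (m - 2) =>
            B ⟨(i : ℕ) + 2, by have := i.isLt; omega⟩
              (if (j : ℕ) = 0 then ⟨0, by omega⟩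
                else ⟨(j : ℕ) + 1, by have := j.isLt; omega⟩)).det
          * (Matrix.of fun i j : Fin m =>
              B i ⟨(j : ℕ) + 1, by have := j.isLt; omega⟩).det) := by
  obtain ⟨n, rfl⟩ : ∃ n, m = n + 3 := ⟨m - 3, by omega⟩
  have key := Matrix.det_pluckpluck B
  -- only the minors deleting column `2` need rewriting; the others agree with the statement's
  -- by unfolding `Fin.succ` and `Fin.castSucc`
  simp only [← Fin.castSucc_succAbove_castSucc, Fin.castSucc_one] at key
  simp only [submatrix, id_eq, Fin.one_succAbove_eq_ite, Fin.val_castSucc] at key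
  exact key
end
end
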